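/- arXiv:2601.17700 — 4 statements merged into one kernel-verified Lean document; each statement's English description precedes it below -/
import Mathlib

section
/- Let V : [0,∞) × D → ℝ be continuously differentiable and suppose there are continuous functions W1, W2, W3 : D → ℝ, each positive definite relative to x*, such that W1(x) ≤ V(t,x) ≤ W2(x) and ∂V/∂t (t,x) + ∇ₓV(t,x) · f(t,x) ≤ −W3(x) for all (t,x) ∈ [0,∞) × D. Then for every r ∈ (0, r0) and every c with 0 < c < min{W1(x) : ‖x − x*‖ = r}, there exists a class KL function β such that every solution x(·) of ẋ = f(t,x) on [t0,∞) with x(t0) ∈ {x ∈ closure B(x*, r) : W2(x) ≤ c} satisfies ‖x(t) − x*‖ ≤ β(‖x(t0) − x*‖, t − t0) for all t ≥ t0 ≥ 0. -/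
open Set Filter Metric Topology
open scoped ENNReal NNReal

noncomputable section

/-- The domain `[0, a)` of a class `KL` function, where `a : ℝ≥0∞` (`a = ⊤` means `[0, ∞)`). -/
def KLdom (a : ℝ≥0∞) : Set ℝ := {r : ℝ | 0 ≤ r ∧ ENNReal.ofReal r < a}

/-- `β : [0, a) × [0, ∞) → [0, ∞)` is a class `KL` function: it is continuous, for each fixed
`t` the map `r ↦ β r t` is strictly increasing and vanishes at `0` (class `K`), and for each
fixed `r` the map `t ↦ β r t` is decreasing and tends to `0` at infinity. -/
def IsClassKL (a : ℝ≥0∞) (β : ℝ → ℝ → ℝ) : Prop :=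
  ContinuousOn (fun p : ℝ × ℝ => β p.1 p.2) (KLdom a ×ˢ Ici (0 : ℝ)) ∧
  (∀ r ∈ KLdom a, ∀ t ∈ Ici (0 : ℝ), 0 ≤ β r t) ∧
  (∀ t ∈ Ici (0 : ℝ), StrictMonoOn (fun r => β r t) (KLdom a)) ∧
  (∀ t ∈ Ici (0 : ℝ), β 0 t = 0) ∧
  (∀ r ∈ KLdom a, AntitoneOn (fun t => β r t) (Ici (0 : ℝ))) ∧
  (∀ r ∈ KLdom a, Tendsto (fun t => β r t) atTop (nhds 0))

/-- `W` is continuous on `D` and positive definite relative to `x₀`. -/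
def PosDefOn {E : Type*} [NormedAddCommGroup E] (D : Set E) (x₀ : E) (W : E → ℝ) : Prop :=
  ContinuousOn W D ∧ W x₀ = 0 ∧ ∀ x ∈ D, x ≠ x₀ → 0 < W x



/-!
Along a solution, `v t = V t (x t)` satisfies `W₁ (x t) ≤ v t ≤ W₂ (x t)` and `v' ≤ -W₃ (x t)`.
Since `v` does not increase and `c < W₁` on the sphere of radius `r`, the solution never reaches
that sphere. On the compact annuli `ε ≤ ‖y - x*‖ ≤ r` the functions `W₁` and `W₃` have positive
lower bounds, while `W₂` is small near `x*`. This gives uniform stability (start `δ`-close, stay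
`ε`-close) and uniform attractivity (a solution still `ε`-far at time `t` was `δ`-far all along,
so `v` decreased at a fixed positive rate; as `0 < v ≤ c`, this lasts at most a fixed time).
The optimal radii in these two estimates, as functions of the initial distance and of the elapsed
time, are monotone. Averaging turns them into a class `K` function `κ` and a continuous, positive,
decreasing function `φ` tending to `0`, and `√(κ ρ) * √(φ s)` is the class `KL` bound.
-/

theorem le_add_mul_sub_of_hasDerivWithinAt_le {g g' : ℝ → ℝ} {a b C : ℝ} (hab : a ≤ b)
    (hg : ∀ t ∈ Icc a b, HasDerivWithinAt g (g' t) (Ici a) t) (hC : ∀ t ∈ Ico a b, g' t ≤ C) :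
    g b ≤ g a + C * (b - a) :=
  image_le_of_deriv_right_le_deriv_boundary (B := fun t => g a + C * (t - a)) (B' := fun _ => C)
    (fun t ht => (hg t ht).continuousWithinAt.mono Icc_subset_Ici_self)
    (fun t ht => (hg t (Ico_subset_Icc_self ht)).mono (Ici_subset_Ici.2 ht.1)) (by simp)
    (by fun_prop)
    (fun t _ => by simpa using ((((hasDerivAt_id t).sub_const a).const_mul C).const_add
      (g a)).hasDerivWithinAt)
    hC ⟨hab, le_rfl⟩

theorem le_sqrt_mul_sqrt {a b c : ℝ} (ha : 0 ≤ a) (hb : a ≤ b) (hc : a ≤ c) : a ≤ √b * √c :=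
  calc a = √a * √a := (Real.mul_self_sqrt ha).symm
    _ ≤ √b * √c := by gcongr

def infRadius (r : ℝ) (P : ℝ → Prop) : ℝ := sInf (insert r {ε | ε ∈ Ioc 0 r ∧ P ε})

section infRadius

variable {r : ℝ} {P Q : ℝ → Prop}

theorem bddBelow_infRadius_set (hr : 0 ≤ r) : BddBelow (insert r {ε | ε ∈ Ioc 0 r ∧ P ε}) :=
  ⟨0, by rintro _ (rfl | ⟨hε, -⟩); exacts [hr, hε.1.le]⟩

theorem infRadius_nonneg (hr : 0 ≤ r) : 0 ≤ infRadius r P :=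
  le_csInf (insert_nonempty _ _) (by rintro _ (rfl | ⟨hε, -⟩); exacts [hr, hε.1.le])

theorem infRadius_le {ε : ℝ} (hε : ε ∈ Ioc 0 r) (hP : P ε) : infRadius r P ≤ ε :=
  csInf_le (bddBelow_infRadius_set (hε.1.le.trans hε.2)) (mem_insert_of_mem _ ⟨hε, hP⟩)

theorem le_infRadius {d : ℝ} (hd : d ≤ r) (h : ∀ ε ∈ Ioc 0 r, P ε → d ≤ ε) : d ≤ infRadius r P :=
  le_csInf (insert_nonempty _ _) (by rintro _ (rfl | ⟨hε, hP⟩); exacts [hd, h _ hε hP])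

theorem infRadius_anti (hr : 0 ≤ r) (hPQ : ∀ ε, P ε → Q ε) : infRadius r Q ≤ infRadius r P :=
  csInf_le_csInf (bddBelow_infRadius_set hr) (insert_nonempty _ _)
    (insert_subset_insert fun _ hε => ⟨hε.1, hPQ _ hε.2⟩)

theorem tendsto_infRadius {ι : Type*} {l : Filter ι} {P : ι → ℝ → Prop} (hr : 0 < r)
    (h : ∀ ε ∈ Ioc 0 r, ∀ᶠ i in l, P i ε) : Tendsto (fun i => infRadius r (P i)) l (𝓝 0) := by
  refine tendsto_order.2 ⟨fun b hb => .of_forall fun i => hb.trans_le (infRadius_nonneg hr.le),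
    fun b hb => ?_⟩
  have hε : min (b / 2) r ∈ Ioc 0 r := ⟨lt_min (half_pos hb) hr, min_le_right _ _⟩
  filter_upwards [h _ hε] with i hi
  exact (infRadius_le hε hi).trans_lt ((min_le_left _ _).trans_lt (half_lt_self hb))

end infRadius

theorem Filter.Tendsto.eq_of_nhdsWithin {X Y : Type*} [TopologicalSpace X] [TopologicalSpace Y]
    [T2Space Y] {f : X → Y} {s : Set X} {a : X} {b : Y} (h : Tendsto f (𝓝[s] a) (𝓝 b))
    (ha : a ∈ s) : f a = b :=
  tendsto_nhds_unique (tendsto_pure_nhds f a) (h.mono_left (pure_le_nhdsWithin ha))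

def majorantK (ψ : ℝ → ℝ) (ρ : ℝ) : ℝ := ρ + ∫ u in (1 : ℝ)..2, ψ (ρ * u)

section majorantK

variable {ψ : ℝ → ℝ}

theorem intervalIntegrable_comp_mul (hψ : Monotone ψ) {ρ : ℝ} (hρ : 0 ≤ ρ) (a b : ℝ) :
    IntervalIntegrable (fun u => ψ (ρ * u)) MeasureTheory.volume a b :=
  (hψ.comp (monotone_mul_left_of_nonneg hρ)).intervalIntegrable

theorem le_majorantK (hψ : Monotone ψ) {ρ : ℝ} (hρ : 0 ≤ ρ) : ψ ρ ≤ majorantK ψ ρ := by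
  have : ∫ _ in (1 : ℝ)..2, ψ ρ ≤ ∫ u in (1 : ℝ)..2, ψ (ρ * u) :=
    intervalIntegral.integral_mono_on one_le_two intervalIntegrable_const
      (intervalIntegrable_comp_mul hψ hρ 1 2) fun u hu => hψ (le_mul_of_one_le_right hρ hu.1)
  norm_num at this
  rw [majorantK]
  linarith

theorem strictMonoOn_majorantK (hψ : Monotone ψ) : StrictMonoOn (majorantK ψ) (Ici 0) := by
  intro ρ hρ ρ' hρ' h
  have : ∫ u in (1 : ℝ)..2, ψ (ρ * u) ≤ ∫ u in (1 : ℝ)..2, ψ (ρ' * u) :=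
    intervalIntegral.integral_mono_on one_le_two (intervalIntegrable_comp_mul hψ hρ 1 2)
      (intervalIntegrable_comp_mul hψ hρ' 1 2)
      fun u hu => hψ (mul_le_mul_of_nonneg_right h.le (zero_le_one.trans hu.1))
  rw [majorantK, majorantK]
  linarith

theorem majorantK_zero (hψ0 : Tendsto ψ (𝓝[≥] 0) (𝓝 0)) : majorantK ψ 0 = 0 := by
  simp [majorantK, hψ0.eq_of_nhdsWithin self_mem_Ici]

theorem continuousAt_majorantK (hψ : Monotone ψ) {ρ₀ : ℝ} (hρ₀ : 0 < ρ₀) :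
    ContinuousAt (majorantK ψ) ρ₀ := by
  set G : ℝ → ℝ := fun b => ∫ σ in (0 : ℝ)..b, ψ σ
  have hG : Continuous G :=
    intervalIntegral.continuous_primitive (fun _ _ => hψ.intervalIntegrable) 0
  have hrescale : ∀ ρ ≠ 0, majorantK ψ ρ = ρ + ρ⁻¹ * (G (ρ * 2) - G (ρ * 1)) := fun ρ hρ => by
    rw [majorantK, intervalIntegral.integral_comp_mul_left _ hρ,
      intervalIntegral.integral_interval_sub_left hψ.intervalIntegrable hψ.intervalIntegrable,
      smul_eq_mul]
  refine ContinuousAt.congr ?_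
    ((eventually_ne_nhds hρ₀.ne').mono fun ρ hρ => (hrescale ρ hρ).symm)
  exact continuousAt_id.add ((continuousAt_inv₀ hρ₀.ne').mul (by fun_prop))

theorem continuousWithinAt_majorantK_zero (hψ : Monotone ψ) (hψ0 : Tendsto ψ (𝓝[≥] 0) (𝓝 0)) :
    ContinuousWithinAt (majorantK ψ) (Ici 0) 0 := by
  have hdouble : Tendsto (fun ρ : ℝ => ρ * 2) (𝓝[≥] 0) (𝓝[≥] 0) :=
    tendsto_nhdsWithin_iff.2
      ⟨by simpa using ((continuous_mul_const (2 : ℝ)).tendsto 0).mono_left nhdsWithin_le_nhds,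
        eventually_nhdsWithin_of_forall fun ρ (hρ : 0 ≤ ρ) => mem_Ici.2 (by positivity)⟩
  have hbound : Tendsto (fun ρ => ρ + ψ (ρ * 2)) (𝓝[≥] 0) (𝓝 0) := by
    simpa using (tendsto_id.mono_left nhdsWithin_le_nhds).add (hψ0.comp hdouble)
  rw [ContinuousWithinAt, majorantK_zero hψ0]
  refine tendsto_of_tendsto_of_tendsto_of_le_of_le' tendsto_const_nhds hbound ?_ ?_ <;>
    filter_upwards [self_mem_nhdsWithin] with ρ (hρ : 0 ≤ ρ)
  · exact (hψ0.eq_of_nhdsWithin self_mem_Ici ▸ hψ hρ).trans (le_majorantK hψ hρ)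
  · have : ∫ u in (1 : ℝ)..2, ψ (ρ * u) ≤ ∫ _ in (1 : ℝ)..2, ψ (ρ * 2) :=
      intervalIntegral.integral_mono_on one_le_two (intervalIntegrable_comp_mul hψ hρ 1 2)
        intervalIntegrable_const fun u hu => hψ (mul_le_mul_of_nonneg_left hu.2 hρ)
    norm_num at this
    rw [majorantK]
    linarith

theorem continuousOn_majorantK (hψ : Monotone ψ) (hψ0 : Tendsto ψ (𝓝[≥] 0) (𝓝 0)) :
    ContinuousOn (majorantK ψ) (Ici 0) := by
  intro ρ hρ
  rcases (mem_Ici.1 hρ).eq_or_lt with rfl | hρ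
  · exact continuousWithinAt_majorantK_zero hψ hψ0
  · exact (continuousAt_majorantK hψ hρ).continuousWithinAt

end majorantK

def majorantL (Φ : ℝ → ℝ) (s : ℝ) : ℝ := Real.exp (-s) + ∫ σ in (s - 1)..s, Φ σ

section majorantL

variable {Φ : ℝ → ℝ}

theorem Antitone.integral_sub_one_mem_Icc (hΦ : Antitone Φ) (s : ℝ) :
    ∫ σ in (s - 1)..s, Φ σ ∈ Icc (Φ s) (Φ (s - 1)) := by
  have hle : s - 1 ≤ s := by linarith
  have h₁ := intervalIntegral.integral_mono_on (μ := MeasureTheory.volume) hle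
    intervalIntegrable_const hΦ.intervalIntegrable fun σ hσ => hΦ hσ.2
  have h₂ := intervalIntegral.integral_mono_on (μ := MeasureTheory.volume) hle
    hΦ.intervalIntegrable intervalIntegrable_const fun σ hσ => hΦ hσ.1
  norm_num at h₁ h₂
  exact ⟨h₁, h₂⟩

theorem le_majorantL (hΦ : Antitone Φ) (s : ℝ) : Φ s ≤ majorantL Φ s := by
  have := (hΦ.integral_sub_one_mem_Icc s).1
  have := Real.exp_pos (-s)
  rw [majorantL]
  linarith

theorem majorantL_pos (hΦ : Antitone Φ) (hΦ0 : Tendsto Φ atTop (𝓝 0)) (s : ℝ) :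
    0 < majorantL Φ s := by
  have := (hΦ.integral_sub_one_mem_Icc s).1
  have := hΦ.le_of_tendsto hΦ0 s
  have := Real.exp_pos (-s)
  rw [majorantL]
  linarith

theorem antitone_majorantL (hΦ : Antitone Φ) : Antitone (majorantL Φ) := by
  intro s s' h
  have hshift : ∀ s, ∫ σ in (s - 1)..s, Φ σ = ∫ u in (-1 : ℝ)..0, Φ (u + s) := fun s => by
    rw [intervalIntegral.integral_comp_add_right]; ring_nf
  have hint : ∀ s, IntervalIntegrable (fun u => Φ (u + s)) MeasureTheory.volume (-1) 0 :=
    fun s => (hΦ.comp_monotone (monotone_id.add_const s)).intervalIntegrable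
  have : ∫ u in (-1 : ℝ)..0, Φ (u + s') ≤ ∫ u in (-1 : ℝ)..0, Φ (u + s) :=
    intervalIntegral.integral_mono_on (by norm_num) (hint s') (hint s)
      fun u _ => hΦ (by linarith)
  have := Real.exp_le_exp.2 (neg_le_neg h)
  rw [majorantL, majorantL, hshift, hshift]
  linarith

theorem continuous_majorantL (hΦ : Antitone Φ) : Continuous (majorantL Φ) := by
  have hG : Continuous fun b => ∫ σ in (0 : ℝ)..b, Φ σ :=
    intervalIntegral.continuous_primitive (fun _ _ => hΦ.intervalIntegrable) 0
  have : majorantL Φ = fun s => Real.exp (-s) +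
      ((∫ σ in (0 : ℝ)..s, Φ σ) - ∫ σ in (0 : ℝ)..(s - 1), Φ σ) := funext fun s => by
    rw [majorantL, intervalIntegral.integral_interval_sub_left hΦ.intervalIntegrable
      hΦ.intervalIntegrable]
  rw [this]
  fun_prop

theorem tendsto_majorantL (hΦ : Antitone Φ) (hΦ0 : Tendsto Φ atTop (𝓝 0)) :
    Tendsto (majorantL Φ) atTop (𝓝 0) := by
  have hbound : Tendsto (fun s => Real.exp (-s) + Φ (s - 1)) atTop (𝓝 0) := by
    simpa [sub_eq_add_neg] using Real.tendsto_exp_neg_atTop_nhds_zero.add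
      (hΦ0.comp (tendsto_atTop_add_const_right _ (-1) tendsto_id))
  refine tendsto_of_tendsto_of_tendsto_of_le_of_le tendsto_const_nhds hbound
    (fun s => (majorantL_pos hΦ hΦ0 s).le) fun s => ?_
  have := (hΦ.integral_sub_one_mem_Icc s).2
  simp only [majorantL]
  linarith

end majorantL

/-- The geometric mean `√(κ ρ) * √(φ s)` dominates `min (κ ρ) (φ s)` and, unlike the minimum, is
strictly increasing in `ρ`. -/
theorem isClassKL_sqrt_mul_sqrt {κ φ : ℝ → ℝ} (hκc : ContinuousOn κ (Ici 0))
    (hκm : StrictMonoOn κ (Ici 0)) (hκ0 : κ 0 = 0) (hφc : Continuous φ) (hφpos : ∀ s, 0 < φ s)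
    (hφm : Antitone φ) (hφ0 : Tendsto φ atTop (𝓝 0)) :
    IsClassKL ⊤ fun ρ s => √(κ ρ) * √(φ s) := by
  have hKL : KLdom ⊤ = Ici 0 := by ext; simp [KLdom]
  simp only [IsClassKL, hKL]
  refine ⟨?_, fun _ _ _ _ => by positivity, fun s _ ρ hρ ρ' hρ' h => ?_, fun s _ => by simp [hκ0],
    fun ρ _ s _ s' _ h => ?_, fun ρ _ => ?_⟩
  · exact ((hκc.comp continuousOn_fst fun p hp => hp.1).sqrt).mul
      (hφc.comp continuous_snd).continuousOn.sqrt
  · have hκρ : 0 ≤ κ ρ := hκ0 ▸ hκm.monotoneOn self_mem_Ici hρ hρ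
    exact mul_lt_mul_of_pos_right (Real.sqrt_lt_sqrt hκρ (hκm hρ hρ' h))
      (Real.sqrt_pos.2 (hφpos s))
  · exact mul_le_mul_of_nonneg_left (Real.sqrt_le_sqrt (hφm h)) (Real.sqrt_nonneg _)
  · simpa using ((Real.continuous_sqrt.tendsto 0).comp hφ0).const_mul √(κ ρ)

theorem exists_isClassKL_of_uniformlyStable_of_uniformlyAttractive {E : Type*}
    [PseudoMetricSpace E] {x₀ : E} {Adm : ℝ → (ℝ → E) → Prop} {r : ℝ} (hr : 0 < r)
    (hbound : ∀ t₀ x, Adm t₀ x → ∀ t ∈ Ici t₀, dist (x t) x₀ ≤ r)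
    (hstab : ∀ ε > 0, ∃ δ > 0, ∀ t₀ x, Adm t₀ x → dist (x t₀) x₀ < δ →
      ∀ t ∈ Ici t₀, dist (x t) x₀ ≤ ε)
    (hattr : ∀ ε > 0, ∃ T, ∀ t₀ x, Adm t₀ x → ∀ t ∈ Ici t₀, T ≤ t - t₀ → dist (x t) x₀ ≤ ε) :
    ∃ β, IsClassKL ⊤ β ∧
      ∀ t₀ x, Adm t₀ x → ∀ t ∈ Ici t₀, dist (x t) x₀ ≤ β (dist (x t₀) x₀) (t - t₀) := by
  set ψ : ℝ → ℝ := fun ρ => infRadius r fun ε =>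
    ∀ t₀ x, Adm t₀ x → dist (x t₀) x₀ ≤ ρ → ∀ t ∈ Ici t₀, dist (x t) x₀ ≤ ε
  set Φ : ℝ → ℝ := fun s => infRadius r fun ε =>
    ∀ t₀ x, Adm t₀ x → ∀ t ∈ Ici t₀, s ≤ t - t₀ → dist (x t) x₀ ≤ ε
  have hψ : Monotone ψ := fun ρ ρ' h =>
    infRadius_anti hr.le fun _ hε t₀ x hx h₀ => hε t₀ x hx (h₀.trans h)
  have hΦ : Antitone Φ := fun s s' h =>
    infRadius_anti hr.le fun _ hε t₀ x hx t ht hs => hε t₀ x hx t ht (h.trans hs)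
  have hψ0 : Tendsto ψ (𝓝[≥] 0) (𝓝 0) := tendsto_infRadius hr fun ε hε => by
    obtain ⟨δ, hδ, h⟩ := hstab ε hε.1
    filter_upwards [nhdsWithin_le_nhds (gt_mem_nhds hδ)] with ρ hρ t₀ x hx h₀
    exact h t₀ x hx (h₀.trans_lt hρ)
  have hΦ0 : Tendsto Φ atTop (𝓝 0) := tendsto_infRadius hr fun ε hε => by
    obtain ⟨T, h⟩ := hattr ε hε.1
    filter_upwards [eventually_ge_atTop T] with s hs t₀ x hx t ht hst
    exact h t₀ x hx t ht (hs.trans hst)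
  refine ⟨_, isClassKL_sqrt_mul_sqrt (continuousOn_majorantK hψ hψ0) (strictMonoOn_majorantK hψ)
    (majorantK_zero hψ0) (continuous_majorantL hΦ) (majorantL_pos hΦ hΦ0) (antitone_majorantL hΦ)
    (tendsto_majorantL hΦ hΦ0), fun t₀ x hx t ht => le_sqrt_mul_sqrt dist_nonneg ?_ ?_⟩
  · exact (le_infRadius (hbound t₀ x hx t ht) fun _ _ hε => hε t₀ x hx le_rfl t ht).trans
      (le_majorantK hψ dist_nonneg)
  · exact (le_infRadius (hbound t₀ x hx t ht) fun _ _ hε => hε t₀ x hx t ht le_rfl).trans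
      (le_majorantL hΦ _)

section Lyapunov

variable {E : Type*} [NormedAddCommGroup E]

theorem PosDefOn.nonneg {D : Set E} {x₀ : E} {W : E → ℝ} (h : PosDefOn D x₀ W) {y : E}
    (hy : y ∈ D) : 0 ≤ W y := by
  rcases eq_or_ne y x₀ with rfl | hne
  · exact h.2.1.ge
  · exact (h.2.2 y hy hne).le

theorem PosDefOn.exists_pos_le_of_le_dist [ProperSpace E] {D : Set E} {x₀ : E} {W : E → ℝ}
    (h : PosDefOn D x₀ W) {r ε : ℝ} (hsub : closedBall x₀ r ⊆ D) (hε : 0 < ε) :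
    ∃ m > 0, ∀ y ∈ closedBall x₀ r, ε ≤ dist y x₀ → m ≤ W y := by
  obtain ⟨m, hm, hmW⟩ := ((isCompact_closedBall x₀ r).diff isOpen_ball).exists_forall_le'
    (h.1.mono (sdiff_subset.trans hsub)) (a := 0)
    fun y hy => h.2.2 y (hsub hy.1) (by rintro rfl; exact hy.2 (mem_ball_self hε))
  exact ⟨m, hm, fun y hy hεy => hmW y ⟨hy, not_lt.2 hεy⟩⟩

structure IsLyapunovAlong (D : Set E) (W₁ W₂ W₃ : E → ℝ) (t₀ : ℝ) (x : ℝ → E) (v : ℝ → ℝ) :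
    Prop where
  continuousOn : ContinuousOn x (Ici t₀)
  mapsTo : MapsTo x (Ici t₀) D
  lower : ∀ t ∈ Ici t₀, W₁ (x t) ≤ v t
  upper : ∀ t ∈ Ici t₀, v t ≤ W₂ (x t)
  hasDerivWithinAt_le : ∀ t ∈ Ici t₀, ∃ v', HasDerivWithinAt v v' (Ici t₀) t ∧ v' ≤ -W₃ (x t)

namespace IsLyapunovAlong

variable {D : Set E} {x₀ : E} {W₁ W₂ W₃ : E → ℝ} {t₀ : ℝ} {x : ℝ → E} {v : ℝ → ℝ}

theorem le_sub_mul (h : IsLyapunovAlong D W₁ W₂ W₃ t₀ x v) {a b k : ℝ} (ha : t₀ ≤ a)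
    (hab : a ≤ b) (hk : ∀ σ ∈ Icc a b, k ≤ W₃ (x σ)) : v b ≤ v a - k * (b - a) := by
  choose! v' hv' hv'le using h.hasDerivWithinAt_le
  have := le_add_mul_sub_of_hasDerivWithinAt_le (g' := v') (C := -k) hab
    (fun t ht => (hv' t (ha.trans ht.1)).mono (Ici_subset_Ici.2 ha))
    fun t ht => (hv'le t (ha.trans ht.1)).trans (neg_le_neg (hk t (Ico_subset_Icc_self ht)))
  linarith

theorem antitoneOn (h : IsLyapunovAlong D W₁ W₂ W₃ t₀ x v) (hW₃ : PosDefOn D x₀ W₃) :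
    AntitoneOn v (Ici t₀) := fun a ha b _ hab => by
  have := h.le_sub_mul ha hab (k := 0) fun σ hσ => hW₃.nonneg (h.mapsTo (ha.trans hσ.1))
  linarith

theorem mono (h : IsLyapunovAlong D W₁ W₂ W₃ t₀ x v) {s : ℝ} (hs : t₀ ≤ s) :
    IsLyapunovAlong D W₁ W₂ W₃ s x v where
  continuousOn := h.continuousOn.mono (Ici_subset_Ici.2 hs)
  mapsTo := h.mapsTo.mono_left (Ici_subset_Ici.2 hs)
  lower t ht := h.lower t (hs.trans ht)
  upper t ht := h.upper t (hs.trans ht)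
  hasDerivWithinAt_le t ht := (h.hasDerivWithinAt_le t (hs.trans ht)).imp fun _ hv' =>
    ⟨hv'.1.mono (Ici_subset_Ici.2 hs), hv'.2⟩

theorem mapsTo_ball (h : IsLyapunovAlong D W₁ W₂ W₃ t₀ x v) (hW₃ : PosDefOn D x₀ W₃) {r c : ℝ}
    (hcW₁ : ∀ y ∈ sphere x₀ r, c < W₁ y) (hx₀ : x t₀ ∈ closedBall x₀ r) (hc : v t₀ ≤ c) :
    MapsTo x (Ici t₀) (ball x₀ r) := by
  intro t ht
  by_contra hout
  obtain ⟨τ, hτ, hτr⟩ := intermediate_value_Icc ht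
    ((continuous_id.dist continuous_const).comp_continuousOn
      (h.continuousOn.mono Icc_subset_Ici_self)) ⟨mem_closedBall.1 hx₀, not_lt.1 hout⟩
  have := h.lower τ hτ.1
  have := h.antitoneOn hW₃ self_mem_Ici hτ.1 hτ.1
  linarith [hcW₁ (x τ) hτr]

variable [ProperSpace E] (hD : D ∈ 𝓝 x₀) {r : ℝ} (hsub : closedBall x₀ r ⊆ D)
  (hW₁ : PosDefOn D x₀ W₁) (hW₂ : PosDefOn D x₀ W₂) (hW₃ : PosDefOn D x₀ W₃)
include hD hsub hW₁ hW₂ hW₃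

theorem uniform_stability {ε : ℝ} (hε : 0 < ε) :
    ∃ δ > 0, ∀ t₀ x v, IsLyapunovAlong D W₁ W₂ W₃ t₀ x v → MapsTo x (Ici t₀) (closedBall x₀ r) →
      dist (x t₀) x₀ < δ → ∀ t ∈ Ici t₀, dist (x t) x₀ < ε := by
  obtain ⟨μ, hμ, hμW₁⟩ := hW₁.exists_pos_le_of_le_dist hsub hε
  obtain ⟨δ, hδ, hδW₂⟩ := Metric.eventually_nhds_iff.1
    ((hW₂.1.continuousAt hD).eventually (gt_mem_nhds (hW₂.2.1.symm ▸ hμ)))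
  refine ⟨δ, hδ, fun t₀ x v h hxr hx₀ t ht => not_le.1 fun hεt => ?_⟩
  have := h.lower t ht
  have := h.antitoneOn hW₃ self_mem_Ici ht ht
  have := h.upper t₀ self_mem_Ici
  linarith [hμW₁ (x t) (hxr ht) hεt, hδW₂ hx₀]

theorem uniform_attractivity (c : ℝ) {ε : ℝ} (hε : 0 < ε) :
    ∃ T, ∀ t₀ x v, IsLyapunovAlong D W₁ W₂ W₃ t₀ x v → MapsTo x (Ici t₀) (closedBall x₀ r) →
      v t₀ ≤ c → ∀ t ∈ Ici t₀, T ≤ t - t₀ → dist (x t) x₀ < ε := by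
  obtain ⟨δ, hδ, hstab⟩ := uniform_stability hD hsub hW₁ hW₂ hW₃ hε
  obtain ⟨k, hk, hkW₃⟩ := hW₃.exists_pos_le_of_le_dist hsub hδ
  refine ⟨c / k, fun t₀ x v h hxr hc t ht hT => not_le.1 fun hεt => ?_⟩
  -- restarting at a time `σ` with `x σ ∈ ball x₀ δ` would keep the solution `ε`-close at time `t`
  have hW₃x : ∀ σ ∈ Icc t₀ t, k ≤ W₃ (x σ) := fun σ hσ => hkW₃ _ (hxr hσ.1) <| not_lt.1
    fun hσδ => (hstab σ x v (h.mono hσ.1) (hxr.mono_left (Ici_subset_Ici.2 hσ.1)) hσδ t hσ.2).not_ge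
      hεt
  have hW₁x : 0 < W₁ (x t) :=
    hW₁.2.2 _ (hsub (hxr ht)) fun hxt => by rw [hxt, dist_self] at hεt; linarith
  have := h.le_sub_mul le_rfl ht hW₃x
  have := h.lower t ht
  have : c ≤ k * (t - t₀) := (div_le_iff₀' hk).1 hT
  linarith

theorem exists_isClassKL (hr : 0 < r) {c : ℝ} (hcW₁ : ∀ y ∈ sphere x₀ r, c < W₁ y) :
    ∃ β, IsClassKL ⊤ β ∧ ∀ t₀ x v, IsLyapunovAlong D W₁ W₂ W₃ t₀ x v → x t₀ ∈ closedBall x₀ r →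
      v t₀ ≤ c → ∀ t ∈ Ici t₀, dist (x t) x₀ ≤ β (dist (x t₀) x₀) (t - t₀) := by
  have hinside : ∀ t₀ x v, IsLyapunovAlong D W₁ W₂ W₃ t₀ x v → x t₀ ∈ closedBall x₀ r →
      v t₀ ≤ c → MapsTo x (Ici t₀) (closedBall x₀ r) := fun t₀ x v h hx₀ hc =>
    (h.mapsTo_ball hW₃ hcW₁ hx₀ hc).mono_right ball_subset_closedBall
  obtain ⟨β, hβ, hβx⟩ := exists_isClassKL_of_uniformlyStable_of_uniformlyAttractive (x₀ := x₀)
    (Adm := fun t₀ x => ∃ v, IsLyapunovAlong D W₁ W₂ W₃ t₀ x v ∧ x t₀ ∈ closedBall x₀ r ∧ v t₀ ≤ c)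
    hr (fun t₀ x ⟨v, h, hx₀, hc⟩ => hinside t₀ x v h hx₀ hc)
    (fun ε hε => by
      obtain ⟨δ, hδ, hstab⟩ := uniform_stability hD hsub hW₁ hW₂ hW₃ hε
      exact ⟨δ, hδ, fun t₀ x ⟨v, h, hx₀, hc⟩ hδx t ht =>
        (hstab t₀ x v h (hinside t₀ x v h hx₀ hc) hδx t ht).le⟩)
    fun ε hε => by
      obtain ⟨T, hattr⟩ := uniform_attractivity hD hsub hW₁ hW₂ hW₃ c hε
      exact ⟨T, fun t₀ x ⟨v, h, hx₀, hc⟩ t ht hT =>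
        (hattr t₀ x v h (hinside t₀ x v h hx₀ hc) hc t ht hT).le⟩
  exact ⟨β, hβ, fun t₀ x v h hx₀ hc => hβx t₀ x ⟨v, h, hx₀, hc⟩⟩

end IsLyapunovAlong

end Lyapunov

theorem hasDerivWithinAt_comp_curve {E : Type*} [NormedAddCommGroup E] [NormedSpace ℝ E]
    {D : Set E} (hD : IsOpen D) {V : ℝ → E → ℝ}
    (hV : DifferentiableOn ℝ (fun p : ℝ × E => V p.1 p.2) (Ici 0 ×ˢ D)) {x : ℝ → E} {x' : E}
    {t₀ t : ℝ} (ht₀ : 0 ≤ t₀) (ht : t₀ ≤ t) (hxD : MapsTo x (Ici t₀) D)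
    (hx : HasDerivWithinAt x x' (Ici t₀) t) :
    HasDerivWithinAt (fun τ => V τ (x τ))
      (derivWithin (fun τ => V τ (x t)) (Ici 0) t + fderiv ℝ (V t) (x t) x') (Ici t₀) t := by
  have hL := (hV (t, x t) ⟨ht₀.trans ht, hxD ht⟩).hasFDerivWithinAt
  set L := fderivWithin ℝ (fun p : ℝ × E => V p.1 p.2) (Ici 0 ×ˢ D) (t, x t)
  have hslice : HasDerivWithinAt (fun τ => ((τ, x t) : ℝ × E)) (1, 0) (Ici 0) t :=
    (hasDerivWithinAt_id t _).prodMk (hasDerivWithinAt_const t _ _)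
  have hVt : derivWithin (fun τ => V τ (x t)) (Ici 0) t = L (1, 0) := by
    have := hL.comp_hasDerivWithinAt t hslice fun τ hτ => mk_mem_prod hτ (hxD ht)
    exact this.derivWithin (uniqueDiffOn_Ici 0 t (ht₀.trans ht))
  have hVx : fderiv ℝ (V t) (x t) = L.comp (ContinuousLinearMap.inr ℝ ℝ E) :=
    ((hL.comp (x t) (hasFDerivAt_prodMk_right t (x t)).hasFDerivWithinAt
      fun y hy => mk_mem_prod (ht₀.trans ht) hy).hasFDerivAt (hD.mem_nhds (hxD ht))).fderiv
  have := hL.comp_hasDerivWithinAt t ((hasDerivWithinAt_id t _).prodMk hx)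
    fun τ hτ => mk_mem_prod (ht₀.trans hτ) (hxD hτ)
  have hsplit : L (1, 0) + L (0, x') = L (1, x') := by rw [← map_add]; simp
  rw [hVt, hVx, ContinuousLinearMap.comp_apply, ContinuousLinearMap.inr_apply, hsplit]
  simpa [Function.comp_def] using this

theorem stmt_0_general
    {n : ℕ}
    (D : Set (EuclideanSpace ℝ (Fin n))) (hD : IsOpen D)
    (xstar : EuclideanSpace ℝ (Fin n)) (hxstar : xstar ∈ D)
    (f : ℝ → EuclideanSpace ℝ (Fin n) → EuclideanSpace ℝ (Fin n))
    (V : ℝ → EuclideanSpace ℝ (Fin n) → ℝ)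
    -- `V` is continuously differentiable on `[0, ∞) × D`
    (hV : ContDiffOn ℝ 1 (fun p : ℝ × EuclideanSpace ℝ (Fin n) => V p.1 p.2)
      (Ici (0 : ℝ) ×ˢ D))
    (W₁ W₂ W₃ : EuclideanSpace ℝ (Fin n) → ℝ)
    (hW₁ : PosDefOn D xstar W₁) (hW₂ : PosDefOn D xstar W₂) (hW₃ : PosDefOn D xstar W₃)
    -- `W₁ x ≤ V t x ≤ W₂ x`
    (hVbound : ∀ t ∈ Ici (0 : ℝ), ∀ x ∈ D, W₁ x ≤ V t x ∧ V t x ≤ W₂ x)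
    -- `∂V/∂t + ∇ₓV ⬝ f ≤ -W₃`
    (hVderiv : ∀ t ∈ Ici (0 : ℝ), ∀ x ∈ D,
      derivWithin (fun τ => V τ x) (Ici (0 : ℝ)) t + fderiv ℝ (V t) x (f t x) ≤ -W₃ x)
    -- `r ∈ (0, r₀)` where `r₀ = sup {r > 0 : ball xstar r ⊆ D}`
    (r : ℝ) (hr : 0 < r) (hrlt : ∃ r' : ℝ, r < r' ∧ ball xstar r' ⊆ D)
    -- `0 < c < min {W₁ x : ‖x - xstar‖ = r}`
    (c : ℝ) (hcmin : ∀ x ∈ sphere xstar r, c < W₁ x) :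
    ∃ β : ℝ → ℝ → ℝ, IsClassKL ⊤ β ∧
      ∀ (t₀ : ℝ) (x : ℝ → EuclideanSpace ℝ (Fin n)), 0 ≤ t₀ →
        (∀ t ∈ Ici t₀, x t ∈ D) →
        (∀ t ∈ Ici t₀, HasDerivWithinAt x (f t (x t)) (Ici t₀) t) →
        x t₀ ∈ closure (ball xstar r) → W₂ (x t₀) ≤ c →
        ∀ t ∈ Ici t₀, dist (x t) xstar ≤ β (dist (x t₀) xstar) (t - t₀) := by
  obtain ⟨r', hrr', hball⟩ := hrlt
  have hsub : closedBall xstar r ⊆ D := (closedBall_subset_ball hrr').trans hball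
  obtain ⟨β, hβ, hβx⟩ := IsLyapunovAlong.exists_isClassKL (hD.mem_nhds hxstar) hsub hW₁ hW₂ hW₃
    hr hcmin
  refine ⟨β, hβ, fun t₀ x ht₀ hxD hx hx₀ hc => hβx t₀ x (fun t => V t (x t)) ?_ ?_ ?_⟩
  · exact
      { continuousOn := fun t ht => (hx t ht).continuousWithinAt
        mapsTo := hxD
        lower := fun t ht => (hVbound t (ht₀.trans ht) _ (hxD t ht)).1
        upper := fun t ht => (hVbound t (ht₀.trans ht) _ (hxD t ht)).2
        hasDerivWithinAt_le := fun t ht =>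
          ⟨_, hasDerivWithinAt_comp_curve hD (hV.differentiableOn one_ne_zero) ht₀ ht hxD (hx t ht),
            hVderiv t (ht₀.trans ht) _ (hxD t ht)⟩ }
  · rwa [closure_ball xstar hr.ne'] at hx₀
  · exact (hVbound t₀ ht₀ _ (hxD t₀ self_mem_Ici)).2.trans hc

theorem stmt_0
    {n : ℕ} (hn : 1 ≤ n)
    (D : Set (EuclideanSpace ℝ (Fin n))) (hD : IsOpen D)
    (xstar : EuclideanSpace ℝ (Fin n)) (hxstar : xstar ∈ D)
    (f : ℝ → EuclideanSpace ℝ (Fin n) → EuclideanSpace ℝ (Fin n))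
    -- `f` is continuous in `t`
    (hf_t : ∀ x ∈ D, ContinuousOn (fun t => f t x) (Ici (0 : ℝ)))
    -- `f` is locally Lipschitz in `x`
    (hf_x : ∀ t ∈ Ici (0 : ℝ), ∀ x₀ ∈ D, ∃ K : ℝ≥0, ∃ ε > (0 : ℝ),
      LipschitzOnWith K (f t) (ball x₀ ε ∩ D))
    -- `xstar` is an equilibrium point
    (hf_eq : ∀ t ∈ Ici (0 : ℝ), f t xstar = 0)
    (V : ℝ → EuclideanSpace ℝ (Fin n) → ℝ)
    -- `V` is continuously differentiable on `[0, ∞) × D`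
    (hV : ContDiffOn ℝ 1 (fun p : ℝ × EuclideanSpace ℝ (Fin n) => V p.1 p.2)
      (Ici (0 : ℝ) ×ˢ D))
    (W₁ W₂ W₃ : EuclideanSpace ℝ (Fin n) → ℝ)
    (hW₁ : PosDefOn D xstar W₁) (hW₂ : PosDefOn D xstar W₂) (hW₃ : PosDefOn D xstar W₃)
    -- `W₁ x ≤ V t x ≤ W₂ x`
    (hVbound : ∀ t ∈ Ici (0 : ℝ), ∀ x ∈ D, W₁ x ≤ V t x ∧ V t x ≤ W₂ x)
    -- `∂V/∂t + ∇ₓV ⬝ f ≤ -W₃`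
    (hVderiv : ∀ t ∈ Ici (0 : ℝ), ∀ x ∈ D,
      derivWithin (fun τ => V τ x) (Ici (0 : ℝ)) t + fderiv ℝ (V t) x (f t x) ≤ -W₃ x)
    -- `r ∈ (0, r₀)` where `r₀ = sup {r > 0 : ball xstar r ⊆ D}`
    (r : ℝ) (hr : 0 < r) (hrlt : ∃ r' : ℝ, r < r' ∧ ball xstar r' ⊆ D)
    -- `0 < c < min {W₁ x : ‖x - xstar‖ = r}`
    (c : ℝ) (hc : 0 < c) (hcmin : ∀ x ∈ sphere xstar r, c < W₁ x) :
    ∃ β : ℝ → ℝ → ℝ, IsClassKL ⊤ β ∧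
      ∀ (t₀ : ℝ) (x : ℝ → EuclideanSpace ℝ (Fin n)), 0 ≤ t₀ →
        (∀ t ∈ Ici t₀, x t ∈ D) →
        (∀ t ∈ Ici t₀, HasDerivWithinAt x (f t (x t)) (Ici t₀) t) →
        x t₀ ∈ closure (ball xstar r) → W₂ (x t₀) ≤ c →
        ∀ t ∈ Ici t₀, dist (x t) xstar ≤ β (dist (x t₀) xstar) (t - t₀) :=
  stmt_0_general D hD xstar hxstar f V hV W₁ W₂ W₃ hW₁ hW₂ hW₃ hVbound hVderiv r hr hrlt c hcmin
end
end

section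
/- Let a > 0, A = (0, a), and define ρ : H² × H² → ℝ by ρ(x, x̂) = ln[(s₊ + s₋)/(s₊ − s₋)] with s± = √((x₁ − x̂₁)² + (x₂ ± x̂₂)²), and S(x) = √(x₁² + (a + x₂)²) · √(x₁² + (a − x₂)²). Then for every x = (x₁, x₂) ∈ H² with x ≠ A, the function x ↦ ρ(x, A)² is differentiable at x with partial derivatives ∂/∂x₁ [ρ(x,A)²] = 4 ρ(x,A) x₁ / S(x) and ∂/∂x₂ [ρ(x,A)²] = 2 ρ(x,A) (x₂² − x₁² − a²) / (x₂ S(x)). -/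
/-!
Write `s₋` and `s₊` for the Euclidean distances from `x` to `A = (0, a)` and to its mirror image
`(0, -a)`, so that `ρ(x, A) = log ((s₊ + s₋) / (s₊ - s₋))` with `s₋ < s₊` on the upper half-plane.
The chain rule gives `∇ρ = 2 (s₊ ∇s₋ - s₋ ∇s₊) / (s₊² - s₋²)`, and the stated partial derivatives
follow from `∇s± = (x₁, x₂ ± a) / s±`, `s±² = x₁² + (x₂ ± a)²` and `s₊² - s₋² = 4 a x₂`.
-/

open ContinuousLinearMap

theorem HasFDerivAt.log_add_div_sub {E : Type*} [NormedAddCommGroup E] [NormedSpace ℝ E]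
    {u v : E → ℝ} {u' v' : E →L[ℝ] ℝ} {x : E} (hu : HasFDerivAt u u' x) (hv : HasFDerivAt v v' x)
    (hadd : u x + v x ≠ 0) (hsub : u x - v x ≠ 0) :
    HasFDerivAt (fun y => Real.log ((u y + v y) / (u y - v y)))
      ((2 / (u x ^ 2 - v x ^ 2)) • (u x • v' - v x • u')) x := by
  have hquot := (hu.add hv).mul ((hasDerivAt_inv hsub).comp_hasFDerivAt x (hu.sub hv))
  simp only [Function.comp_def] at hquot
  refine (hquot.log (div_ne_zero hadd hsub)).congr_fderiv ?_
  have hsq : u x ^ 2 - v x ^ 2 ≠ 0 := by rw [sq_sub_sq]; exact mul_ne_zero hadd hsub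
  ext z
  simp only [Pi.sub_apply, Pi.mul_apply, Pi.add_apply, mul_inv_rev, inv_inv, neg_smul, smul_neg,
    smul_add, add_apply, neg_apply, smul_apply, sub_apply, smul_eq_mul]
  field_simp
  ring

theorem sub_sq_add_sub_sq_pos {c x : ℝ × ℝ} (hx : x ≠ c) :
    0 < (x.1 - c.1) ^ 2 + (x.2 - c.2) ^ 2 := by
  by_contra! h
  have h1 : (x.1 - c.1) ^ 2 = 0 := by linarith [sq_nonneg (x.1 - c.1), sq_nonneg (x.2 - c.2)]
  have h2 : (x.2 - c.2) ^ 2 = 0 := by linarith [sq_nonneg (x.1 - c.1), sq_nonneg (x.2 - c.2)]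
  exact hx (Prod.ext (by simpa [sub_eq_zero] using h1) (by simpa [sub_eq_zero] using h2))

theorem hasFDerivAt_sqrt_sub_sq_add_sub_sq {c x : ℝ × ℝ} (hx : x ≠ c) :
    HasFDerivAt (fun y : ℝ × ℝ => √((y.1 - c.1) ^ 2 + (y.2 - c.2) ^ 2))
      ((√((x.1 - c.1) ^ 2 + (x.2 - c.2) ^ 2))⁻¹ •
        ((x.1 - c.1) • fst ℝ ℝ ℝ + (x.2 - c.2) • snd ℝ ℝ ℝ)) x := by
  have hsq := ((hasFDerivAt_fst (𝕜 := ℝ) (p := x)).sub_const c.1).pow 2 |>.add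
    (((hasFDerivAt_snd (𝕜 := ℝ) (p := x)).sub_const c.2).pow 2)
  refine (hsq.sqrt (sub_sq_add_sub_sq_pos hx).ne').congr_fderiv ?_
  ext <;>
    simp only [Pi.add_apply, one_div, mul_inv_rev, Nat.add_one_sub_one, pow_one, nsmul_eq_mul,
      Nat.cast_ofNat, smul_add, add_comp, smul_comp, fst_comp_inl, snd_comp_inl, fst_comp_inr,
      snd_comp_inr, smul_zero, add_zero, zero_add, smul_apply, id_apply, smul_eq_mul, mul_one] <;>
    field_simp

theorem stmt_8 (a : ℝ) (ha : 0 < a)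
    (A : ℝ × ℝ) (hA : A = ((0 : ℝ), a))
    -- the hyperbolic distance of the Poincaré upper half-plane model
    (ρ : ℝ × ℝ → ℝ × ℝ → ℝ)
    (hρ : ∀ x y : ℝ × ℝ, ρ x y =
      Real.log
        ((Real.sqrt ((x.1 - y.1) ^ 2 + (x.2 + y.2) ^ 2) +
            Real.sqrt ((x.1 - y.1) ^ 2 + (x.2 - y.2) ^ 2)) /
          (Real.sqrt ((x.1 - y.1) ^ 2 + (x.2 + y.2) ^ 2) -
            Real.sqrt ((x.1 - y.1) ^ 2 + (x.2 - y.2) ^ 2))))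
    (S : ℝ × ℝ → ℝ)
    (hS : ∀ x : ℝ × ℝ, S x =
      Real.sqrt (x.1 ^ 2 + (a + x.2) ^ 2) * Real.sqrt (x.1 ^ 2 + (a - x.2) ^ 2)) :
    ∀ x : ℝ × ℝ, 0 < x.2 → x ≠ A →
      ∃ L : ℝ × ℝ →L[ℝ] ℝ,
        HasFDerivAt (fun y : ℝ × ℝ => ρ y A ^ 2) L x ∧
        L (1, 0) = 4 * ρ x A * x.1 / S x ∧
        L (0, 1) = 2 * ρ x A * (x.2 ^ 2 - x.1 ^ 2 - a ^ 2) / (x.2 * S x) := by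
  subst hA
  rintro ⟨p, q⟩ (hq : 0 < q) hxA
  have hx_mirror : (p, q) ≠ (0, -a) := fun h => by simp only [Prod.mk.injEq] at h; linarith
  have hsm_pos := Real.sqrt_pos.2 (sub_sq_add_sub_sq_pos hxA)
  have hsp := hasFDerivAt_sqrt_sub_sq_add_sub_sq hx_mirror
  have hsm := hasFDerivAt_sqrt_sub_sq_add_sub_sq hxA
  simp only [sub_zero, sub_neg_eq_add] at hsp hsm hsm_pos
  have hsm_lt : √(p ^ 2 + (q - a) ^ 2) < √(p ^ 2 + (q + a) ^ 2) :=
    Real.sqrt_lt_sqrt (by positivity) (by nlinarith)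
  have hd := (hsp.log_add_div_sub hsm (by linarith) (by linarith)).pow 2
  dsimp only at hd
  simp only [hρ, hS, sub_zero, add_comm a, ← neg_sub _ a, neg_sq]
  set sp := √(p ^ 2 + (q + a) ^ 2)
  set sm := √(p ^ 2 + (q - a) ^ 2)
  have hsp_sq : sp ^ 2 = p ^ 2 + (q + a) ^ 2 := Real.sq_sqrt (by positivity)
  have hsm_sq : sm ^ 2 = p ^ 2 + (q - a) ^ 2 := Real.sq_sqrt (by positivity)
  have hsp_pos : 0 < sp := hsm_pos.trans hsm_lt
  have hdiff : sp ^ 2 - sm ^ 2 ≠ 0 := by rw [hsp_sq, hsm_sq]; nlinarith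
  refine ⟨_, hd, ?_, ?_⟩ <;>
    simp only [Nat.add_one_sub_one, pow_one, nsmul_eq_mul, Nat.cast_ofNat, smul_add, smul_apply,
      sub_apply, add_apply, coe_fst', coe_snd', smul_eq_mul, mul_one, mul_zero, add_zero, zero_add] <;>
    field_simp
  · ring
  · rw [hsp_sq, hsm_sq]
    ring
end

section
/- Let a > 0, A = (0, a), let d : [0,∞) × H² → ℝ, and define f₁(t,x) = −2 d(t,x) x₁ x₂² and f₂(t,x) = d(t,x) x₂ (a² + x₁² − x₂²). Let ρ(x, A) = ln[(s₊ + s₋)/(s₊ − s₋)] with s± = √(x₁² + (x₂ ± a)²) and S(x) = √(x₁² + (a + x₂)²)·√(x₁² + (a − x₂)²). Then for every t ≥ 0 and every x ∈ H² with x ≠ A, the derivative of V(x) := ρ(x, A)² along the vector field f satisfies ∂V/∂x₁ · f₁(t,x) + ∂V/∂x₂ · f₂(t,x) = −2 d(t,x) ρ(x,A) (4 x₁² x₂² + (x₂² − x₁² − a²)²) / S(x). -/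
open Set Filter Topology

noncomputable section

/-! Writing `ρ = log ((s₊ + s₋) / (s₊ - s₋))`, the derivative of `ρ` along any direction is
`(s₊² (s₋²)' - s₋² (s₊²)') / (s₊ s₋ (s₊² - s₋²))`, and `s₊² - s₋² = 4 x₂ y₂`. This gives
`∂₁ρ = 2 (x₁ - y₁) / (s₊ s₋)` and `∂₂ρ = (x₂² - (x₁ - y₁)² - y₂²) / (x₂ s₊ s₋)`;
the claim follows from `∂V = 2 ρ ∂ρ` by clearing denominators. -/

lemma hasDerivAt_log_sqrt_add_div_sqrt_sub {P Q : ℝ → ℝ} {P' Q' p : ℝ}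
    (hP : HasDerivAt P P' p) (hQ : HasDerivAt Q Q' p) (hQ0 : 0 < Q p) (hQP : Q p < P p) :
    HasDerivAt (fun s => Real.log ((√(P s) + √(Q s)) / (√(P s) - √(Q s))))
      ((P p * Q' - Q p * P') / (√(P p) * √(Q p) * (P p - Q p))) p := by
  have hv0 : 0 < √(Q p) := Real.sqrt_pos.mpr hQ0
  have hvu : √(Q p) < √(P p) := Real.sqrt_lt_sqrt hQ0.le hQP
  have hu' := hP.sqrt (hQ0.trans hQP).ne'
  have hv' := hQ.sqrt hQ0.ne'
  have hratio := (hu'.fun_add hv').fun_div (hu'.fun_sub hv') (sub_pos.mpr hvu).ne'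
  refine (hratio.log (div_pos (by linarith) (sub_pos.mpr hvu)).ne').congr_deriv ?_
  have hu2 := Real.sq_sqrt (hQ0.trans hQP).le
  have hv2 := Real.sq_sqrt hQ0.le
  generalize √(P p) = u at hu2 hvu ⊢
  generalize √(Q p) = v at hv2 hv0 hvu ⊢
  rw [← hu2, ← hv2]
  have : 0 < u := hv0.trans hvu
  have : 0 < u - v := sub_pos.mpr hvu
  have : 0 < u + v := by linarith
  have : u ^ 2 - v ^ 2 ≠ 0 := by nlinarith
  field_simp
  ring

def hypDist (x y : ℝ × ℝ) : ℝ :=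
  Real.log
    ((√((x.1 - y.1) ^ 2 + (x.2 + y.2) ^ 2) + √((x.1 - y.1) ^ 2 + (x.2 - y.2) ^ 2)) /
      (√((x.1 - y.1) ^ 2 + (x.2 + y.2) ^ 2) - √((x.1 - y.1) ^ 2 + (x.2 - y.2) ^ 2)))

section hypDist

variable {x y : ℝ × ℝ}

lemma sq_add_sq_sub_pos_of_ne (hxy : x ≠ y) : 0 < (x.1 - y.1) ^ 2 + (x.2 - y.2) ^ 2 := by
  by_contra! h
  apply hxy
  ext <;> nlinarith [sq_nonneg (x.1 - y.1), sq_nonneg (x.2 - y.2)]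

lemma sq_add_sq_sub_lt_sq_add_sq_add (hx : 0 < x.2) (hy : 0 < y.2) :
    (x.1 - y.1) ^ 2 + (x.2 - y.2) ^ 2 < (x.1 - y.1) ^ 2 + (x.2 + y.2) ^ 2 := by
  nlinarith [mul_pos hx hy]

lemma hasDerivAt_hypDist_fst (hx : 0 < x.2) (hy : 0 < y.2) (hxy : x ≠ y) :
    HasDerivAt (fun s => hypDist (s, x.2) y)
      (2 * (x.1 - y.1) /
        (√((x.1 - y.1) ^ 2 + (x.2 + y.2) ^ 2) * √((x.1 - y.1) ^ 2 + (x.2 - y.2) ^ 2))) x.1 := by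
  have hP : HasDerivAt (fun s => (s - y.1) ^ 2 + (x.2 + y.2) ^ 2) (2 * (x.1 - y.1)) x.1 := by
    simpa using (((hasDerivAt_id x.1).sub_const y.1).pow 2).add_const ((x.2 + y.2) ^ 2)
  have hQ : HasDerivAt (fun s => (s - y.1) ^ 2 + (x.2 - y.2) ^ 2) (2 * (x.1 - y.1)) x.1 := by
    simpa using (((hasDerivAt_id x.1).sub_const y.1).pow 2).add_const ((x.2 - y.2) ^ 2)
  have hQP := sq_add_sq_sub_lt_sq_add_sq_add hx hy
  refine (hasDerivAt_log_sqrt_add_div_sqrt_sub hP hQ (sq_add_sq_sub_pos_of_ne hxy) hQP).congr_deriv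
    ?_
  have := sub_pos.mpr hQP
  field_simp

lemma hasDerivAt_hypDist_snd (hx : 0 < x.2) (hy : 0 < y.2) (hxy : x ≠ y) :
    HasDerivAt (fun s => hypDist (x.1, s) y)
      ((x.2 ^ 2 - (x.1 - y.1) ^ 2 - y.2 ^ 2) / (x.2 *
        (√((x.1 - y.1) ^ 2 + (x.2 + y.2) ^ 2) * √((x.1 - y.1) ^ 2 + (x.2 - y.2) ^ 2)))) x.2 := by
  have hP : HasDerivAt (fun s => (x.1 - y.1) ^ 2 + (s + y.2) ^ 2) (2 * (x.2 + y.2)) x.2 := by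
    simpa using (((hasDerivAt_id x.2).add_const y.2).pow 2).const_add ((x.1 - y.1) ^ 2)
  have hQ : HasDerivAt (fun s => (x.1 - y.1) ^ 2 + (s - y.2) ^ 2) (2 * (x.2 - y.2)) x.2 := by
    simpa using (((hasDerivAt_id x.2).sub_const y.2).pow 2).const_add ((x.1 - y.1) ^ 2)
  have hQP := sq_add_sq_sub_lt_sq_add_sq_add hx hy
  refine (hasDerivAt_log_sqrt_add_div_sqrt_sub hP hQ (sq_add_sq_sub_pos_of_ne hxy) hQP).congr_deriv
    ?_
  have := sub_pos.mpr hQP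
  field_simp
  ring

end hypDist

theorem stmt_10 (a : ℝ) (ha : 0 < a)
    (A : ℝ × ℝ) (hA : A = ((0 : ℝ), a))
    (d : ℝ → ℝ × ℝ → ℝ)
    (f₁ f₂ : ℝ → ℝ × ℝ → ℝ)
    (hf₁ : ∀ t x, f₁ t x = -2 * d t x * x.1 * x.2 ^ 2)
    (hf₂ : ∀ t x, f₂ t x = d t x * x.2 * (a ^ 2 + x.1 ^ 2 - x.2 ^ 2))
    -- the hyperbolic distance of the Poincaré upper half-plane model
    (ρ : ℝ × ℝ → ℝ × ℝ → ℝ)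
    (hρ : ∀ x y : ℝ × ℝ, ρ x y =
      Real.log
        ((Real.sqrt ((x.1 - y.1) ^ 2 + (x.2 + y.2) ^ 2) +
            Real.sqrt ((x.1 - y.1) ^ 2 + (x.2 - y.2) ^ 2)) /
          (Real.sqrt ((x.1 - y.1) ^ 2 + (x.2 + y.2) ^ 2) -
            Real.sqrt ((x.1 - y.1) ^ 2 + (x.2 - y.2) ^ 2))))
    (S : ℝ × ℝ → ℝ)
    (hS : ∀ x : ℝ × ℝ, S x =
      Real.sqrt (x.1 ^ 2 + (a + x.2) ^ 2) * Real.sqrt (x.1 ^ 2 + (a - x.2) ^ 2)) :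
    ∀ t ∈ Ici (0 : ℝ), ∀ x : ℝ × ℝ, 0 < x.2 → x ≠ A →
      deriv (fun s => ρ (s, x.2) A ^ 2) x.1 * f₁ t x +
        deriv (fun s => ρ (x.1, s) A ^ 2) x.2 * f₂ t x =
      -2 * d t x * ρ x A * (4 * x.1 ^ 2 * x.2 ^ 2 + (x.2 ^ 2 - x.1 ^ 2 - a ^ 2) ^ 2) / S x := by
  rintro t - x hx hxA
  subst hA
  obtain rfl : ρ = hypDist := funext₂ hρ
  have hfst := (hasDerivAt_hypDist_fst hx ha hxA).fun_pow 2
  have hsnd := (hasDerivAt_hypDist_snd hx ha hxA).fun_pow 2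
  rw [hfst.deriv, hsnd.deriv, hf₁, hf₂, hS]
  have hplus : (x.1 - (0, a).1) ^ 2 + (x.2 + (0, a).2) ^ 2 = x.1 ^ 2 + (a + x.2) ^ 2 := by
    dsimp only; ring
  have hminus : (x.1 - (0, a).1) ^ 2 + (x.2 - (0, a).2) ^ 2 = x.1 ^ 2 + (a - x.2) ^ 2 := by
    dsimp only; ring
  have hS₀ : 0 < √(x.1 ^ 2 + (a + x.2) ^ 2) * √(x.1 ^ 2 + (a - x.2) ^ 2) := by
    rw [← hplus, ← hminus]
    have := sq_add_sq_sub_pos_of_ne hxA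
    positivity
  rw [hplus, hminus]
  field_simp
  ring
end
end

section
/- Under the stated hypotheses on d and k, there exists a class KL function β defined on [0,∞) × [0,∞) such that for every t₀ ≥ 0, every x₀ ∈ H², and every solution x(·) : [t₀,∞) → H² of the system ẋ(t) = f(t, x(t)) with x(t₀) = x₀ (so in particular x₂(t) > 0 for all t ≥ t₀), one has ρ(x(t), A) ≤ β(ρ(x₀, A), t − t₀) for all t ≥ t₀ ≥ 0; hence the equilibrium point A is uniformly asymptotically stable in all of H² with respect to the hyperbolic metric. -/
open Set Filter Metric Topology
open scoped ENNReal NNReal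

noncomputable section

open Real

/-!
For `x₂ > 0` the function `V(x) = (x₁² + x₂² + a²) / (2 a x₂)` equals `cosh ρ(x, A)`, and along
solutions `V' = -2 a d x₂ (V² - 1)`. Since `d ≥ k` and `2 a x₂ ≥ a² / V`, this is at most
`-h(V)` with `h(s) = a² / s · (s² - 1) · m(s)`, where `m` is a continuous positive minorant of `k`
on the (compact) level sets of `V`. An increasing bijection `G : (1, ∞) → ℝ` with `G' ≥ 1 / h`
then satisfies `G(V(x(t))) ≤ G(V(x(t₀))) - (t - t₀)`. In the coordinate `u = log ρ` this says
that `E(u) = G(cosh (exp u))` drops at least by the elapsed time, and `E` being an order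
automorphism of `ℝ`, `β(r, t) = exp (E⁻¹ (E (log r) - t))` is a class `KL` bound.
-/

theorem exists_continuous_pos_comp_le {X : Type*} [TopologicalSpace X] {V k : X → ℝ} {c : ℝ}
    (hV : ∀ b₁ b₂, c < b₁ → IsCompact (V ⁻¹' Icc b₁ b₂))
    (hk : ContinuousOn k {x | c < V x}) (hk_pos : ∀ x, c < V x → 0 < k x) :
    ∃ m : ℝ → ℝ, Continuous m ∧ (∀ s, c < s → 0 < m s) ∧ ∀ x, c < V x → m (V x) ≤ k x := by
  rcases isEmpty_or_nonempty {x // c < V x} with hX | hX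
  · exact ⟨fun _ => 1, continuous_const, fun _ _ => one_pos, fun x hx => (hX.false ⟨x, hx⟩).elim⟩
  -- the inf-convolution of `min k 1` with `|·|` along the values of `V` is `1`-Lipschitz
  set m : ℝ → ℝ := fun s => ⨅ x : {x // c < V x}, (min (k x) 1 + |V x - s|)
  have hterm_nonneg (x : {x // c < V x}) : 0 ≤ min (k x) 1 := le_min (hk_pos x x.2).le zero_le_one
  have hbdd (s : ℝ) : BddBelow (range fun x : {x // c < V x} => min (k x) 1 + |V x - s|) :=
    ⟨0, by rintro _ ⟨x, rfl⟩; exact add_nonneg (hterm_nonneg x) (abs_nonneg _)⟩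
  have hm_le (s : ℝ) (x : {x // c < V x}) : m s ≤ min (k x) 1 + |V x - s| := ciInf_le (hbdd s) x
  refine ⟨m, ?_, fun s hs => ?_, fun x hx => ?_⟩
  · refine (LipschitzWith.of_le_add fun s t =>
      sub_le_iff_le_add.1 (le_ciInf fun x => ?_)).continuous
    rw [Real.dist_eq]
    linarith [hm_le s x, abs_sub_le (V x) t s, abs_sub_comm t s]
  · set δ := (s - c) / 2
    have hδ : 0 < δ := by simp only [δ]; linarith
    obtain ⟨μ, hμ, hμ_le⟩ := (hV (s - δ) (s + δ) (by simp only [δ]; linarith)).exists_forall_le'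
      (hk.mono fun x hx => by
        simp only [δ, mem_preimage, mem_Icc, mem_ofPred_eq] at hx ⊢; linarith [hx.1])
      (fun x hx => hk_pos x (by simp only [δ, mem_preimage, mem_Icc] at hx ⊢; linarith [hx.1]))
    refine (lt_min hδ (lt_min hμ one_pos)).trans_le (le_ciInf fun x => ?_)
    by_cases hx : |V x - s| < δ
    · have hxK : (x : X) ∈ V ⁻¹' Icc (s - δ) (s + δ) := by
        rw [abs_lt] at hx; exact ⟨by linarith, by linarith⟩
      exact (min_le_right _ _).trans
        ((min_le_min_right 1 (hμ_le x hxK)).trans (le_add_of_nonneg_right (abs_nonneg _)))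
    · exact (min_le_left _ _).trans ((not_lt.1 hx).trans (le_add_of_nonneg_left (hterm_nonneg x)))
  · calc m (V x) ≤ min (k x) 1 + |V x - V x| := hm_le (V x) ⟨x, hx⟩
      _ ≤ k x := by simp

lemma monotoneOn_Ioi_of_hasDerivAt_nonneg {c : ℝ} {φ φ' : ℝ → ℝ}
    (hφ : ∀ s > c, HasDerivAt φ (φ' s) s) (hφ' : ∀ s > c, 0 ≤ φ' s) : MonotoneOn φ (Ioi c) :=
  monotoneOn_of_hasDerivWithinAt_nonneg (convex_Ioi c)
    (fun s hs => (hφ s hs).continuousAt.continuousWithinAt)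
    (fun s hs => (hφ s (by simpa using hs)).hasDerivWithinAt)
    (fun s hs => hφ' s (by simpa using hs))

section timeFunction

variable {c : ℝ} {G g : ℝ → ℝ}

lemma tendsto_atTop_of_hasDerivAt_inv_of_le_one (hG : ∀ s > c, HasDerivAt G (g s)⁻¹ s)
    (hg : ∀ s > c, 0 < g s ∧ g s ≤ 1) : Tendsto G atTop atTop := by
  have hmono : MonotoneOn (fun s => G s - s) (Ioi c) :=
    monotoneOn_Ioi_of_hasDerivAt_nonneg (fun s hs => (hG s hs).sub (hasDerivAt_id s))
      fun s hs => sub_nonneg.2 ((one_le_inv₀ (hg s hs).1).2 (hg s hs).2)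
  refine tendsto_atTop_mono' _ ?_ (tendsto_atTop_add_const_left _ (G (c + 1) - (c + 1)) tendsto_id)
  filter_upwards [eventually_ge_atTop (c + 1)] with s hs
  have := hmono (show c + 1 ∈ Ioi c by simp) (show s ∈ Ioi c by simp; linarith) hs
  simp only [id]
  linarith

lemma tendsto_nhdsGT_atBot_of_hasDerivAt_inv_of_le_sq (hG : ∀ s > c, HasDerivAt G (g s)⁻¹ s)
    (hg : ∀ s > c, 0 < g s ∧ g s ≤ (s - c) ^ 2) : Tendsto G (𝓝[>] c) atBot := by
  have hmono : MonotoneOn (fun s => G s + (s - c)⁻¹) (Ioi c) := by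
    refine monotoneOn_Ioi_of_hasDerivAt_nonneg
      (fun s hs => (hG s hs).add (((hasDerivAt_id s).sub_const c).inv (sub_pos.2 hs).ne'))
      fun s hs => ?_
    rw [neg_div, ← sub_eq_add_neg, sub_nonneg, one_div]
    exact inv_anti₀ (hg s hs).1 (hg s hs).2
  have hinv : Tendsto (fun s => (s - c)⁻¹) (𝓝[>] c) atTop :=
    tendsto_inv_nhdsGT_zero.comp <| tendsto_nhdsWithin_of_tendsto_nhds_of_eventually_within _
      (((continuous_sub_right c).tendsto' c 0 (sub_self c)).mono_left nhdsWithin_le_nhds)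
      (by filter_upwards [self_mem_nhdsWithin] with s hs; simpa using hs)
  refine tendsto_atBot_mono' _ ?_
    (tendsto_atBot_add_const_left _ (G (c + 1) + 1) (tendsto_neg_atTop_atBot.comp hinv))
  filter_upwards [Ioc_mem_nhdsGT (show c < c + 1 by linarith)] with s hs
  have := hmono hs.1 (show c + 1 ∈ Ioi c by simp) hs.2
  simp only [add_sub_cancel_left, inv_one] at this
  simp only [Function.comp]
  linarith

end timeFunction

theorem exists_timeFunction {c : ℝ} {h : ℝ → ℝ} (hcont : ContinuousOn h (Ioi c))
    (hpos : ∀ s > c, 0 < h s) :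
    ∃ G : ℝ → ℝ, StrictMonoOn G (Ioi c) ∧ SurjOn G (Ioi c) univ ∧
      ∀ s > c, ∃ G' ≥ (h s)⁻¹, HasDerivAt G G' s := by
  -- capping the rate by `(s - c) ^ 2` and `1` makes `G` unbounded at both ends
  set g : ℝ → ℝ := fun s => min (h s) (min ((s - c) ^ 2) 1)
  have hg_pos (s : ℝ) (hs : c < s) : 0 < g s :=
    lt_min (hpos s hs) (lt_min (pow_pos (sub_pos.2 hs) 2) one_pos)
  have hg_cont : ContinuousOn (fun s => (g s)⁻¹) (Ioi c) :=
    (hcont.inf (by fun_prop)).inv₀ fun s hs => (hg_pos s hs).ne'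
  set G : ℝ → ℝ := fun s => ∫ u in (c + 1)..s, (g u)⁻¹
  have hG' (s : ℝ) (hs : c < s) : HasDerivAt G (g s)⁻¹ s :=
    intervalIntegral.integral_hasDerivAt_right
      ((hg_cont.mono fun u hu => lt_min (by linarith) hs |>.trans_le hu.1).intervalIntegrable)
      (hg_cont.stronglyMeasurableAtFilter isOpen_Ioi s hs)
      (hg_cont.continuousAt (Ioi_mem_nhds hs))
  have hG_cont : ContinuousOn G (Ioi c) := fun s hs => (hG' s hs).continuousAt.continuousWithinAt
  have htop := tendsto_atTop_of_hasDerivAt_inv_of_le_one hG' fun s hs =>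
    ⟨hg_pos s hs, (min_le_right _ _).trans (min_le_right _ _)⟩
  have hbot := tendsto_nhdsGT_atBot_of_hasDerivAt_inv_of_le_sq hG' fun s hs =>
    ⟨hg_pos s hs, (min_le_right _ _).trans (min_le_left _ _)⟩
  refine ⟨G, strictMonoOn_of_hasDerivWithinAt_pos (convex_Ioi c) hG_cont
      (fun s hs => (hG' s (by simpa using hs)).hasDerivWithinAt)
      (fun s hs => inv_pos.2 (hg_pos s (by simpa using hs))),
    hG_cont.surjOn_of_tendsto nonempty_Ioi ((tendsto_comp_coe_Ioi_atBot).2 hbot)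
      (tendsto_comp_val_Ioi_atTop.2 htop),
    fun s hs => ⟨_, inv_anti₀ (hg_pos s hs) (min_le_left _ _), hG' s hs⟩⟩

/-- In the coordinate `E ∘ log`, time acts by translation. -/
def klOfOrderIso (E : ℝ ≃o ℝ) (r t : ℝ) : ℝ :=
  if 0 < r then exp (E.symm (E (log r) - t)) else 0

section klOfOrderIso

variable (E : ℝ ≃o ℝ) {r t : ℝ}

lemma klOfOrderIso_of_pos (hr : 0 < r) : klOfOrderIso E r t = exp (E.symm (E (log r) - t)) :=
  if_pos hr

lemma klOfOrderIso_of_nonpos (hr : r ≤ 0) : klOfOrderIso E r t = 0 :=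
  if_neg hr.not_gt

@[simp]
lemma klOfOrderIso_zero : klOfOrderIso E 0 t = 0 :=
  klOfOrderIso_of_nonpos E le_rfl

lemma klOfOrderIso_nonneg : 0 ≤ klOfOrderIso E r t := by
  unfold klOfOrderIso; split_ifs <;> positivity

lemma klOfOrderIso_le_self (hr : 0 ≤ r) (ht : 0 ≤ t) : klOfOrderIso E r t ≤ r := by
  rcases hr.eq_or_lt with rfl | hr
  · simp [klOfOrderIso]
  calc klOfOrderIso E r t ≤ exp (E.symm (E (log r))) := by
        rw [klOfOrderIso_of_pos E hr]; exact exp_le_exp.2 (E.symm.monotone (by linarith))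
    _ = r := by rw [E.symm_apply_apply, exp_log hr]

lemma le_klOfOrderIso {r₀ : ℝ} (hr : 0 < r) (hr₀ : 0 < r₀) (h : E (log r) ≤ E (log r₀) - t) :
    r ≤ klOfOrderIso E r₀ t := by
  rw [klOfOrderIso_of_pos E hr₀, ← log_le_iff_le_exp hr, ← E.le_iff_le, E.apply_symm_apply]
  exact h

lemma continuousOn_klOfOrderIso :
    ContinuousOn (fun p : ℝ × ℝ => klOfOrderIso E p.1 p.2) (Ici 0 ×ˢ Ici 0) := by
  rintro ⟨r, t⟩ ⟨hr, -⟩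
  rcases (mem_Ici.1 hr).eq_or_lt with rfl | hr
  · -- near `r = 0` the function is squeezed between `0` and `r`
    show Tendsto _ _ (𝓝 (klOfOrderIso E 0 t))
    rw [klOfOrderIso_zero]
    refine squeeze_zero' (eventually_nhdsWithin_of_forall fun q _ => klOfOrderIso_nonneg E)
      (eventually_nhdsWithin_of_forall fun q hq => klOfOrderIso_le_self E hq.1 hq.2) ?_
    exact tendsto_nhdsWithin_of_tendsto_nhds (continuous_fst.tendsto' (0, t) 0 rfl)
  have : ContinuousAt (fun p : ℝ × ℝ => exp (E.symm (E (log p.1) - p.2))) (r, t) :=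
    (continuous_exp.comp E.symm.continuous).continuousAt.comp
      ((E.continuous.continuousAt.comp ((continuousAt_log hr.ne').comp continuousAt_fst)).sub
        continuousAt_snd)
  refine (this.congr ?_).continuousWithinAt
  filter_upwards [continuousAt_fst.eventually (Ioi_mem_nhds hr)] with p hp
  exact (klOfOrderIso_of_pos E hp).symm

lemma strictMonoOn_klOfOrderIso : StrictMonoOn (fun r => klOfOrderIso E r t) (Ici 0) := by
  intro r₁ h₁ r₂ _ h
  show klOfOrderIso E r₁ t < klOfOrderIso E r₂ t
  rcases (mem_Ici.1 h₁).eq_or_lt with rfl | h₁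
  · rw [klOfOrderIso_zero, klOfOrderIso_of_pos E h]
    exact exp_pos _
  rw [klOfOrderIso_of_pos E h₁, klOfOrderIso_of_pos E (h₁.trans h), exp_lt_exp,
    E.symm.lt_iff_lt, sub_lt_sub_iff_right, E.lt_iff_lt]
  exact log_lt_log h₁ h

lemma antitone_klOfOrderIso : Antitone (klOfOrderIso E r) := by
  intro t₁ t₂ h
  rcases lt_or_ge 0 r with hr | hr
  · rw [klOfOrderIso_of_pos E hr, klOfOrderIso_of_pos E hr]
    exact exp_le_exp.2 (E.symm.monotone (by linarith))
  · rw [klOfOrderIso_of_nonpos E hr, klOfOrderIso_of_nonpos E hr]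

lemma tendsto_klOfOrderIso_atTop : Tendsto (klOfOrderIso E r) atTop (𝓝 0) := by
  rcases lt_or_ge 0 r with hr | hr
  · refine (tendsto_exp_atBot.comp (E.symm.tendsto_atBot.comp
      (tendsto_atBot_add_const_left _ (E (log r)) tendsto_neg_atTop_atBot))).congr fun t => ?_
    exact (klOfOrderIso_of_pos E hr).symm
  · exact tendsto_const_nhds.congr fun t => (klOfOrderIso_of_nonpos E hr).symm

theorem isClassKL_klOfOrderIso : IsClassKL ⊤ (klOfOrderIso E) := by
  have hdom : KLdom ⊤ = Ici 0 := by ext r; simp [KLdom]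
  rw [IsClassKL, hdom]
  exact ⟨continuousOn_klOfOrderIso E, fun _ _ _ _ => klOfOrderIso_nonneg E,
    fun _ _ => strictMonoOn_klOfOrderIso E, fun _ _ => klOfOrderIso_zero E,
    fun _ _ => (antitone_klOfOrderIso E).antitoneOn _, fun _ _ => tendsto_klOfOrderIso_atTop E⟩

end klOfOrderIso

section orderIsoCoshExp

variable {G : ℝ → ℝ}

lemma strictMono_comp_cosh_exp (hG : StrictMonoOn G (Ioi 1)) :
    StrictMono fun u => G (cosh (exp u)) := fun u v h =>
  hG (one_lt_cosh.2 (exp_pos u).ne') (one_lt_cosh.2 (exp_pos v).ne')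
    (cosh_lt_cosh.2 (by simpa [abs_of_pos (exp_pos _)] using h))

lemma surjective_comp_cosh_exp (hG : SurjOn G (Ioi 1) univ) :
    Function.Surjective fun u => G (cosh (exp u)) := fun z => by
  obtain ⟨s, hs, rfl⟩ := hG (mem_univ z)
  exact ⟨log (arcosh s), by dsimp only; rw [exp_log (arcosh_pos hs), cosh_arcosh (le_of_lt hs)]⟩

def orderIsoCoshExp (hG_mono : StrictMonoOn G (Ioi 1)) (hG_surj : SurjOn G (Ioi 1) univ) :
    ℝ ≃o ℝ :=
  StrictMono.orderIsoOfSurjective _ (strictMono_comp_cosh_exp hG_mono)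
    (surjective_comp_cosh_exp hG_surj)

lemma orderIsoCoshExp_log (hG_mono : StrictMonoOn G (Ioi 1)) (hG_surj : SurjOn G (Ioi 1) univ)
    {r : ℝ} (hr : 0 < r) : orderIsoCoshExp hG_mono hG_surj (log r) = G (cosh r) := by
  simp [orderIsoCoshExp, exp_log hr]

end orderIsoCoshExp

namespace PoincareHalfPlane

/-- For `0 < x.2` this is `cosh ρ(x, (0, a))`. -/
def coshDist (a : ℝ) (x : ℝ × ℝ) : ℝ := (x.1 ^ 2 + x.2 ^ 2 + a ^ 2) / (2 * a * x.2)

variable {a : ℝ} {x : ℝ × ℝ}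

lemma mul_coshDist (ha : 0 < a) (hx : 0 < x.2) :
    2 * a * x.2 * coshDist a x = x.1 ^ 2 + x.2 ^ 2 + a ^ 2 :=
  mul_div_cancel₀ _ (by positivity)

lemma one_le_coshDist (ha : 0 < a) (hx : 0 < x.2) : 1 ≤ coshDist a x := by
  rw [coshDist, le_div_iff₀ (by positivity)]
  nlinarith [sq_nonneg (x.2 - a), sq_nonneg x.1]

lemma pos_of_coshDist_pos (ha : 0 < a) (h : 0 < coshDist a x) : 0 < x.2 := by
  by_contra! hx
  exact (div_nonpos_of_nonneg_of_nonpos (by positivity) (by nlinarith)).not_gt h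

lemma one_lt_coshDist_iff (ha : 0 < a) : 1 < coshDist a x ↔ 0 < x.2 ∧ x ≠ (0, a) := by
  constructor
  · intro h
    refine ⟨pos_of_coshDist_pos ha (one_pos.trans h), ?_⟩
    rintro rfl
    have : coshDist a (0, a) = 1 := by
      rw [coshDist, div_eq_one_iff_eq (by simp [ha.ne'])]; ring
    exact h.ne' this
  · rintro ⟨hx, hxA⟩
    refine (one_le_coshDist ha hx).lt_of_ne fun h => hxA ?_
    have := mul_coshDist ha hx
    rw [← h, mul_one] at this
    exact Prod.ext (by nlinarith [sq_nonneg x.1, sq_nonneg (x.2 - a)])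
      (by nlinarith [sq_nonneg x.1, sq_nonneg (x.2 - a)])

lemma isCompact_coshDist_preimage_Icc (ha : 0 < a) {b₁ b₂ : ℝ} (hb₁ : 0 < b₁) :
    IsCompact (coshDist a ⁻¹' Icc b₁ b₂) := by
  have hN (x : ℝ × ℝ) : a ^ 2 ≤ x.1 ^ 2 + x.2 ^ 2 + a ^ 2 := by
    nlinarith [sq_nonneg x.1, sq_nonneg x.2]
  have hset : coshDist a ⁻¹' Icc b₁ b₂ =
      {x | 0 ≤ x.2 ∧ 2 * a * b₁ * x.2 ≤ x.1 ^ 2 + x.2 ^ 2 + a ^ 2 ∧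
        x.1 ^ 2 + x.2 ^ 2 + a ^ 2 ≤ 2 * a * b₂ * x.2} := by
    ext x
    have key (hx : 0 < x.2) : b₁ ≤ coshDist a x ∧ coshDist a x ≤ b₂ ↔
        2 * a * b₁ * x.2 ≤ x.1 ^ 2 + x.2 ^ 2 + a ^ 2 ∧
          x.1 ^ 2 + x.2 ^ 2 + a ^ 2 ≤ 2 * a * b₂ * x.2 := by
      rw [coshDist, le_div_iff₀ (by positivity), div_le_iff₀ (by positivity)]
      constructor <;> rintro ⟨h₁, h₂⟩ <;> constructor <;> linarith
    simp only [mem_preimage, mem_Icc, mem_ofPred_eq]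
    constructor
    · intro h
      have hx := pos_of_coshDist_pos ha (hb₁.trans_le h.1)
      exact ⟨hx.le, (key hx).1 h⟩
    · rintro ⟨h₀, h⟩
      have hx : 0 < x.2 := h₀.lt_of_ne fun h' => by
        rw [← h'] at h; nlinarith [hN x, pow_pos ha 2]
      exact (key hx).2 h
  rw [hset]
  refine Metric.isCompact_of_isClosed_isBounded ?_ ?_
  · have hcont : Continuous fun x : ℝ × ℝ => x.1 ^ 2 + x.2 ^ 2 + a ^ 2 := by fun_prop
    exact (isClosed_le continuous_const continuous_snd).inter
      ((isClosed_le (by fun_prop) hcont).inter (isClosed_le hcont (by fun_prop)))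
  · set R := 2 * a * b₂
    refine ((Metric.isBounded_Icc (-R) R).prod (Metric.isBounded_Icc (-R) R)).subset ?_
    rintro x ⟨h₀, -, h⟩
    have h2 : x.2 ≤ R := by nlinarith [sq_nonneg x.1, pow_pos ha 2]
    have h1 : x.1 ^ 2 ≤ R ^ 2 := by nlinarith [sq_nonneg x.2]
    have hR : 0 ≤ R := h₀.trans h2
    exact ⟨abs_le_of_sq_le_sq' h1 hR, by linarith, h2⟩

lemma log_hypRatio_eq_arcosh_coshDist (ha : 0 < a) (hx : 0 < x.2) :
    log ((√(x.1 ^ 2 + (x.2 + a) ^ 2) + √(x.1 ^ 2 + (x.2 - a) ^ 2)) /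
      (√(x.1 ^ 2 + (x.2 + a) ^ 2) - √(x.1 ^ 2 + (x.2 - a) ^ 2))) = arcosh (coshDist a x) := by
  rw [arcosh]
  congr 1
  set p := √(x.1 ^ 2 + (x.2 + a) ^ 2)
  set q := √(x.1 ^ 2 + (x.2 - a) ^ 2)
  set v := coshDist a x
  have hv := one_le_coshDist ha hx
  have hvx := mul_coshDist ha hx
  have hp : p ^ 2 = x.1 ^ 2 + (x.2 + a) ^ 2 := sq_sqrt (by positivity)
  have hq : q ^ 2 = x.1 ^ 2 + (x.2 - a) ^ 2 := sq_sqrt (by positivity)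
  have hs : √(v ^ 2 - 1) ^ 2 = v ^ 2 - 1 := sq_sqrt (by nlinarith)
  -- `p² - q² = 4 a x₂`, `p² + q² = 4 a x₂ v` and `p q = 2 a x₂ √(v² - 1)`
  have hpq : q * p = 2 * a * x.2 * √(v ^ 2 - 1) := by
    rw [← sqrt_mul (by positivity), ← sqrt_sq (by positivity : 0 ≤ 2 * a * x.2),
      ← sqrt_mul (by positivity)]
    congr 1
    nlinarith
  have hq0 : 0 ≤ q := sqrt_nonneg _
  have hqp : q < p := by nlinarith [sqrt_nonneg (x.1 ^ 2 + (x.2 + a) ^ 2)]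
  rw [div_eq_iff (sub_pos.2 hqp).ne']
  refine mul_right_cancel₀ (by linarith : p + q ≠ 0) ?_
  linear_combination
    (1 - (v + √(v ^ 2 - 1))) * hp + (1 + (v + √(v ^ 2 - 1))) * hq + 2 * hpq - 2 * hvx

def field (a : ℝ) (d : ℝ → ℝ × ℝ → ℝ) (t : ℝ) (x : ℝ × ℝ) : ℝ × ℝ :=
  (-2 * d t x * x.1 * x.2 ^ 2, d t x * x.2 * (a ^ 2 + x.1 ^ 2 - x.2 ^ 2))

/-- The decay rate of `coshDist` along trajectories, in terms of a minorant `m` of `d` on the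
level sets of `coshDist`. -/
def decayRate (a : ℝ) (m : ℝ → ℝ) (s : ℝ) : ℝ := a ^ 2 / s * (s ^ 2 - 1) * m s

lemma hasDerivAt_coshDist_comp (ha : 0 < a) {d : ℝ → ℝ × ℝ → ℝ} {x : ℝ → ℝ × ℝ} {s : ℝ}
    (hpos : 0 < (x s).2) (hx : HasDerivAt x (field a d s (x s)) s) :
    HasDerivAt (fun u => coshDist a (x u))
      (-(2 * a * d s (x s) * (x s).2 * (coshDist a (x s) ^ 2 - 1))) s := by
  have h₁ : HasDerivAt (fun u => (x u).1) (field a d s (x s)).1 s :=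
    (ContinuousLinearMap.fst ℝ ℝ ℝ).hasFDerivAt.comp_hasDerivAt s hx
  have h₂ : HasDerivAt (fun u => (x u).2) (field a d s (x s)).2 s :=
    (ContinuousLinearMap.snd ℝ ℝ ℝ).hasFDerivAt.comp_hasDerivAt s hx
  have hnum : HasDerivAt (fun u => (x u).1 ^ 2 + (x u).2 ^ 2 + a ^ 2)
      (2 * (x s).1 * (field a d s (x s)).1 + 2 * (x s).2 * (field a d s (x s)).2) s := by
    simpa using ((h₁.fun_pow 2).add (h₂.fun_pow 2)).add_const (a ^ 2)
  refine (hnum.div (h₂.const_mul (2 * a)) (by positivity)).congr_deriv ?_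
  simp only [field, coshDist]
  field_simp
  ring

lemma continuousAt_coshDist (ha : 0 < a) (hx : 0 < x.2) : ContinuousAt (coshDist a) x :=
  ContinuousAt.div (by fun_prop) (by fun_prop) (by positivity)

lemma decayRate_pos {m : ℝ → ℝ} (ha : 0 < a) (hm : ∀ s > 1, 0 < m s) {s : ℝ} (hs : 1 < s) :
    0 < decayRate a m s :=
  mul_pos (mul_pos (by positivity) (by nlinarith)) (hm s hs)

lemma continuousOn_decayRate {m : ℝ → ℝ} (hm : Continuous m) :
    ContinuousOn (decayRate a m) (Ioi 1) :=
  ContinuousOn.mul (ContinuousOn.mul (continuousOn_const.div continuousOn_id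
    fun s hs => (zero_lt_one.trans hs).ne') (by fun_prop)) hm.continuousOn

lemma decayRate_le {m : ℝ → ℝ} {D : ℝ} (ha : 0 < a) (hm : ∀ s > 1, 0 < m s)
    (h1 : 1 < coshDist a x) (hD : m (coshDist a x) ≤ D) :
    decayRate a m (coshDist a x) ≤ 2 * a * D * x.2 * (coshDist a x ^ 2 - 1) := by
  have hx := ((one_lt_coshDist_iff ha).1 h1).1
  have hv : a ^ 2 / coshDist a x ≤ 2 * a * x.2 := by
    rw [div_le_iff₀ (by linarith), mul_coshDist ha hx]
    nlinarith [sq_nonneg x.1, sq_nonneg x.2]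
  calc decayRate a m (coshDist a x)
      ≤ 2 * a * x.2 * (coshDist a x ^ 2 - 1) * D := by
        have hsq : 0 ≤ coshDist a x ^ 2 - 1 := by nlinarith
        unfold decayRate
        gcongr
        exact (hm _ h1).le
    _ = 2 * a * D * x.2 * (coshDist a x ^ 2 - 1) := by ring

structure IsTrajectory (a : ℝ) (d : ℝ → ℝ × ℝ → ℝ) (x : ℝ → ℝ × ℝ) (t₀ : ℝ) : Prop where
  pos : ∀ t ∈ Ici t₀, 0 < (x t).2
  hasDerivWithinAt : ∀ t ∈ Ici t₀, HasDerivWithinAt x (field a d t (x t)) (Ici t₀) t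

namespace IsTrajectory

variable {d : ℝ → ℝ × ℝ → ℝ} {m : ℝ → ℝ} {x : ℝ → ℝ × ℝ} {t₀ : ℝ}

lemma hasDerivAt_coshDist (ha : 0 < a) (hx : IsTrajectory a d x t₀) {s : ℝ} (hs : t₀ < s) :
    HasDerivAt (fun u => coshDist a (x u))
      (-(2 * a * d s (x s) * (x s).2 * (coshDist a (x s) ^ 2 - 1))) s :=
  hasDerivAt_coshDist_comp ha (hx.pos s hs.le)
    ((hx.hasDerivWithinAt s hs.le).hasDerivAt (Ici_mem_nhds hs))

lemma continuousOn_coshDist (ha : 0 < a) (hx : IsTrajectory a d x t₀) :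
    ContinuousOn (fun t => coshDist a (x t)) (Ici t₀) := fun s hs =>
  (continuousAt_coshDist ha (hx.pos s hs)).comp_continuousWithinAt
    (hx.hasDerivWithinAt s hs).continuousWithinAt

lemma antitoneOn_coshDist (ha : 0 < a) (hm : ∀ s > 1, 0 < m s) (hx : IsTrajectory a d x t₀)
    (hdm : ∀ t ∈ Ici t₀, ∀ y, 1 < coshDist a y → m (coshDist a y) ≤ d t y) :
    AntitoneOn (fun t => coshDist a (x t)) (Ici t₀) := by
  refine antitoneOn_of_hasDerivWithinAt_nonpos (convex_Ici t₀) (hx.continuousOn_coshDist ha)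
    (fun s hs => (hx.hasDerivAt_coshDist ha (by simpa using hs)).hasDerivWithinAt) fun s hs => ?_
  rw [interior_Ici] at hs
  rw [neg_nonpos]
  rcases (one_le_coshDist ha (hx.pos s (mem_Ici.2 hs.le))).eq_or_lt with h | h
  · rw [← h]; simp
  · exact (decayRate_pos ha hm h).le.trans (decayRate_le ha hm h (hdm s (mem_Ici.2 hs.le) _ h))

lemma timeFunction_coshDist_le (ha : 0 < a) (hm : ∀ s > 1, 0 < m s) (hx : IsTrajectory a d x t₀)
    (hdm : ∀ t ∈ Ici t₀, ∀ y, 1 < coshDist a y → m (coshDist a y) ≤ d t y) {G : ℝ → ℝ}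
    (hG : ∀ s > 1, ∃ G' ≥ (decayRate a m s)⁻¹, HasDerivAt G G' s) {t : ℝ} (ht : t₀ ≤ t)
    (h1 : 1 < coshDist a (x t)) :
    G (coshDist a (x t)) ≤ G (coshDist a (x t₀)) - (t - t₀) := by
  have hanti := hx.antitoneOn_coshDist ha hm hdm
  have hgt (s : ℝ) (hs : s ∈ Icc t₀ t) : 1 < coshDist a (x s) :=
    h1.trans_le (hanti hs.1 ht hs.2)
  have hderiv (s : ℝ) (hs : s ∈ Ioo t₀ t) :
      ∃ w ≤ -1, HasDerivAt (fun u => G (coshDist a (x u))) w s := by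
    have hs1 := hgt s (Ioo_subset_Icc_self hs)
    obtain ⟨G', hG'ge, hG'⟩ := hG _ hs1
    set r := decayRate a m (coshDist a (x s))
    set D := 2 * a * d s (x s) * (x s).2 * (coshDist a (x s) ^ 2 - 1)
    have hrate : r ≤ D := decayRate_le ha hm hs1 (hdm s (mem_Ici.2 hs.1.le) _ hs1)
    have hr : 0 < r := decayRate_pos ha hm hs1
    refine ⟨G' * -D, ?_, hG'.comp s (hx.hasDerivAt_coshDist ha hs.1)⟩
    calc G' * -D ≤ r⁻¹ * -D := mul_le_mul_of_nonpos_right hG'ge (by linarith)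
      _ ≤ r⁻¹ * -r := mul_le_mul_of_nonneg_left (neg_le_neg hrate) (inv_pos.2 hr).le
      _ = -1 := by field_simp
  have hcont : ContinuousOn (fun s => G (coshDist a (x s))) (Icc t₀ t) := fun s hs => by
    obtain ⟨_, -, hG'⟩ := hG _ (hgt s hs)
    exact hG'.continuousAt.comp_continuousWithinAt (f := fun s => coshDist a (x s))
      ((hx.continuousOn_coshDist ha).mono Icc_subset_Ici_self s hs)
  have hmvt := (convex_Icc t₀ t).image_sub_le_mul_sub_of_deriv_le hcont
    (fun s hs => by
      rw [interior_Icc] at hs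
      obtain ⟨w, -, hw⟩ := hderiv s hs
      exact hw.differentiableAt.differentiableWithinAt)
    (fun s hs => by
      rw [interior_Icc] at hs
      obtain ⟨w, hw1, hw⟩ := hderiv s hs
      rwa [hw.deriv])
    t₀ (left_mem_Icc.2 ht) t (right_mem_Icc.2 ht) ht
  linarith

theorem arcosh_coshDist_le (ha : 0 < a) (hm : ∀ s > 1, 0 < m s) (hx : IsTrajectory a d x t₀)
    (hdm : ∀ t ∈ Ici t₀, ∀ y, 1 < coshDist a y → m (coshDist a y) ≤ d t y) {G : ℝ → ℝ}
    (hG_mono : StrictMonoOn G (Ioi 1)) (hG_surj : SurjOn G (Ioi 1) univ)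
    (hG : ∀ s > 1, ∃ G' ≥ (decayRate a m s)⁻¹, HasDerivAt G G' s) {t : ℝ} (ht : t₀ ≤ t) :
    arcosh (coshDist a (x t)) ≤
      klOfOrderIso (orderIsoCoshExp hG_mono hG_surj) (arcosh (coshDist a (x t₀))) (t - t₀) := by
  rcases (one_le_coshDist ha (hx.pos t ht)).eq_or_lt with h | h
  · rw [← h, arcosh_zero]
    exact klOfOrderIso_nonneg _
  have h₀ : 1 < coshDist a (x t₀) :=
    h.trans_le (hx.antitoneOn_coshDist ha hm hdm self_mem_Ici ht ht)
  refine le_klOfOrderIso _ (arcosh_pos h) (arcosh_pos h₀) ?_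
  rw [orderIsoCoshExp_log _ _ (arcosh_pos h), orderIsoCoshExp_log _ _ (arcosh_pos h₀),
    cosh_arcosh h.le, cosh_arcosh h₀.le]
  exact hx.timeFunction_coshDist_le ha hm hdm hG ht h

end IsTrajectory

end PoincareHalfPlane

open PoincareHalfPlane

theorem stmt_11_general (a : ℝ) (ha : 0 < a)
    (A : ℝ × ℝ) (hA : A = ((0 : ℝ), a))
    (d : ℝ → ℝ × ℝ → ℝ)
    (k : ℝ × ℝ → ℝ)
    (hk_cont : ContinuousOn k ({x : ℝ × ℝ | 0 < x.2} \ {A}))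
    (hk_pos : ∀ x : ℝ × ℝ, 0 < x.2 → x ≠ A → 0 < k x)
    -- `d t x ≥ k x`
    (hdk : ∀ t ∈ Ici (0 : ℝ), ∀ x : ℝ × ℝ, 0 < x.2 → x ≠ A → k x ≤ d t x)
    (f : ℝ → ℝ × ℝ → ℝ × ℝ)
    (hf : ∀ t x, f t x =
      (-2 * d t x * x.1 * x.2 ^ 2, d t x * x.2 * (a ^ 2 + x.1 ^ 2 - x.2 ^ 2)))
    -- the hyperbolic distance of the Poincaré upper half-plane model
    (ρ : ℝ × ℝ → ℝ × ℝ → ℝ)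
    (hρ : ∀ x y : ℝ × ℝ, ρ x y =
      Real.log
        ((Real.sqrt ((x.1 - y.1) ^ 2 + (x.2 + y.2) ^ 2) +
            Real.sqrt ((x.1 - y.1) ^ 2 + (x.2 - y.2) ^ 2)) /
          (Real.sqrt ((x.1 - y.1) ^ 2 + (x.2 + y.2) ^ 2) -
            Real.sqrt ((x.1 - y.1) ^ 2 + (x.2 - y.2) ^ 2)))) :
    ∃ β : ℝ → ℝ → ℝ, IsClassKL ⊤ β ∧
      ∀ (t₀ : ℝ) (x : ℝ → ℝ × ℝ), 0 ≤ t₀ →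
        (∀ t ∈ Ici t₀, 0 < (x t).2) →
        (∀ t ∈ Ici t₀, HasDerivWithinAt x (f t (x t)) (Ici t₀) t) →
        ∀ t ∈ Ici t₀, ρ (x t) A ≤ β (ρ (x t₀) A) (t - t₀) := by
  subst hA
  have hlevel : {y : ℝ × ℝ | 1 < coshDist a y} = {y | 0 < y.2} \ {(0, a)} := by
    ext y; simp [one_lt_coshDist_iff ha]
  obtain ⟨m, hm_cont, hm_pos, hm_le⟩ := exists_continuous_pos_comp_le
    (fun _ _ hb₁ => isCompact_coshDist_preimage_Icc ha (zero_lt_one.trans hb₁)) (hlevel ▸ hk_cont)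
    (fun y hy => ((one_lt_coshDist_iff ha).1 hy).elim (hk_pos y))
  obtain ⟨G, hG_mono, hG_surj, hG⟩ :=
    exists_timeFunction (continuousOn_decayRate hm_cont) fun s hs => decayRate_pos ha hm_pos hs
  refine ⟨klOfOrderIso (orderIsoCoshExp hG_mono hG_surj), isClassKL_klOfOrderIso _,
    fun t₀ x ht₀ hx2 hx' t ht => ?_⟩
  obtain rfl : f = field a d := funext₂ hf
  have hρA (y : ℝ × ℝ) (hy : 0 < y.2) : ρ y (0, a) = arcosh (coshDist a y) := by
    rw [hρ]; simpa using log_hypRatio_eq_arcosh_coshDist ha hy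
  rw [hρA _ (hx2 t ht), hρA _ (hx2 t₀ self_mem_Ici)]
  refine IsTrajectory.arcosh_coshDist_le ha hm_pos ⟨hx2, hx'⟩ (fun s hs y hy => ?_) hG_mono hG_surj
    hG ht
  obtain ⟨hy2, hyA⟩ := (one_lt_coshDist_iff ha).1 hy
  exact (hm_le y hy).trans (hdk s (ht₀.trans hs) y hy2 hyA)

/-- `W` is continuous on `D` and positive definite relative to `x₀`. -/
theorem stmt_11 (a : ℝ) (ha : 0 < a)
    (A : ℝ × ℝ) (hA : A = ((0 : ℝ), a))
    (d : ℝ → ℝ × ℝ → ℝ)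
    -- `d` is continuous in `t`
    (hd_t : ∀ x : ℝ × ℝ, 0 < x.2 → ContinuousOn (fun t => d t x) (Ici (0 : ℝ)))
    -- `d` is locally Lipschitz in `x` on `H²`
    (hd_x : ∀ t ∈ Ici (0 : ℝ), ∀ x₀ : ℝ × ℝ, 0 < x₀.2 → ∃ K : ℝ≥0, ∃ ε > (0 : ℝ),
      LipschitzOnWith K (d t) (ball x₀ ε ∩ {x : ℝ × ℝ | 0 < x.2}))
    (k : ℝ × ℝ → ℝ)
    (hk_cont : ContinuousOn k ({x : ℝ × ℝ | 0 < x.2} \ {A}))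
    (hk_pos : ∀ x : ℝ × ℝ, 0 < x.2 → x ≠ A → 0 < k x)
    -- `k x * √(x₁² + (x₂ - a)²) → 0` as `x → A`
    (hk_lim : Tendsto (fun x : ℝ × ℝ => k x * Real.sqrt (x.1 ^ 2 + (x.2 - a) ^ 2))
      (nhdsWithin A ({x : ℝ × ℝ | 0 < x.2} \ {A})) (nhds 0))
    -- `d t x ≥ k x`
    (hdk : ∀ t ∈ Ici (0 : ℝ), ∀ x : ℝ × ℝ, 0 < x.2 → x ≠ A → k x ≤ d t x)
    (f : ℝ → ℝ × ℝ → ℝ × ℝ)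
    (hf : ∀ t x, f t x =
      (-2 * d t x * x.1 * x.2 ^ 2, d t x * x.2 * (a ^ 2 + x.1 ^ 2 - x.2 ^ 2)))
    -- the hyperbolic distance of the Poincaré upper half-plane model
    (ρ : ℝ × ℝ → ℝ × ℝ → ℝ)
    (hρ : ∀ x y : ℝ × ℝ, ρ x y =
      Real.log
        ((Real.sqrt ((x.1 - y.1) ^ 2 + (x.2 + y.2) ^ 2) +
            Real.sqrt ((x.1 - y.1) ^ 2 + (x.2 - y.2) ^ 2)) /
          (Real.sqrt ((x.1 - y.1) ^ 2 + (x.2 + y.2) ^ 2) -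
            Real.sqrt ((x.1 - y.1) ^ 2 + (x.2 - y.2) ^ 2)))) :
    ∃ β : ℝ → ℝ → ℝ, IsClassKL ⊤ β ∧
      ∀ (t₀ : ℝ) (x : ℝ → ℝ × ℝ), 0 ≤ t₀ →
        (∀ t ∈ Ici t₀, 0 < (x t).2) →
        (∀ t ∈ Ici t₀, HasDerivWithinAt x (f t (x t)) (Ici t₀) t) →
        ∀ t ∈ Ici t₀, ρ (x t) A ≤ β (ρ (x t₀) A) (t - t₀) :=
  stmt_11_general a ha A hA d k hk_cont hk_pos hdk f hf ρ hρ
end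
end
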